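/- arXiv:2409.16859 — 12 statements merged into one kernel-verified Lean document; each statement's English description precedes it below -/
import Mathlib

section
/- Let F : ℝ^p → ℝ^p, let η > 0 and β ∈ (0,1], and suppose sequences (x^k), (y^k), (u^k) satisfy y^k = x^k - (η/β) u^k and x^{k+1} = x^k - η F(y^k). Then for any γ > 0 and any x̂ ∈ ℝ^p, ‖x^{k+1} - x̂‖² ≤ ‖x^k - x̂‖² - β‖y^k - x^k‖² + (η²/γ)‖F(y^k) - u^k‖² - 2η⟨F(y^k), y^k - x̂⟩ - (β - γ)‖x^{k+1} - y^k‖² - (1-β)‖x^{k+1} - x^k‖². -/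
open scoped RealInnerProductSpace

private lemma geg_aux {E : Type*} [NormedAddCommGroup E] [InnerProductSpace ℝ E]
    (d v w : E) (η β γ : ℝ) (hβ0 : 0 < β) (hγ : 0 < γ) :
    ‖d - η • v‖ ^ 2 ≤
      ‖d‖ ^ 2 - β * ‖(η / β) • w‖ ^ 2 + (η ^ 2 / γ) * ‖v - w‖ ^ 2
        - 2 * η * ⟪v, d - (η / β) • w⟫
        - (β - γ) * ‖(η / β) • w - η • v‖ ^ 2
        - (1 - β) * ‖η • v‖ ^ 2 := by
  have hβ := hβ0.ne'
  have hγ' := hγ.ne'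
  have key : ‖d‖ ^ 2 - β * ‖(η / β) • w‖ ^ 2 + (η ^ 2 / γ) * ‖v - w‖ ^ 2
        - 2 * η * ⟪v, d - (η / β) • w⟫
        - (β - γ) * ‖(η / β) • w - η • v‖ ^ 2
        - (1 - β) * ‖η • v‖ ^ 2 - ‖d - η • v‖ ^ 2
      = (η ^ 2 / γ) * ‖(v - w) - γ • (v - β⁻¹ • w)‖ ^ 2 := by
    simp only [← real_inner_self_eq_norm_sq, inner_sub_left, inner_sub_right,
      real_inner_smul_left, real_inner_smul_right, real_inner_comm w v,
      real_inner_comm w d, real_inner_comm v d]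
    field_simp
    ring
  nlinarith [mul_nonneg (div_nonneg (sq_nonneg η) hγ.le)
      (sq_nonneg ‖(v - w) - γ • (v - β⁻¹ • w)‖)]

theorem geg_key_estimate {p : ℕ}
    (F : EuclideanSpace ℝ (Fin p) → EuclideanSpace ℝ (Fin p))
    (η β : ℝ) (hη : 0 < η) (hβ0 : 0 < β) (hβ1 : β ≤ 1)
    (x y u : ℕ → EuclideanSpace ℝ (Fin p))
    (hy : ∀ k, y k = x k - (η / β) • u k)
    (hx : ∀ k, x (k + 1) = x k - η • F (y k)) :
    ∀ γ : ℝ, 0 < γ → ∀ (xhat : EuclideanSpace ℝ (Fin p)) (k : ℕ),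
      ‖x (k + 1) - xhat‖ ^ 2 ≤
        ‖x k - xhat‖ ^ 2 - β * ‖y k - x k‖ ^ 2
          + (η ^ 2 / γ) * ‖F (y k) - u k‖ ^ 2
          - 2 * η * ⟪F (y k), y k - xhat⟫
          - (β - γ) * ‖x (k + 1) - y k‖ ^ 2
          - (1 - β) * ‖x (k + 1) - x k‖ ^ 2 := by
  intro γ hγ xhat k
  have e1 : x (k + 1) - xhat = (x k - xhat) - η • F (y k) := by
    rw [hx k]; abel
  have e2 : y k - x k = -((η / β) • u k) := by rw [hy k]; abel
  have e3 : y k - xhat = (x k - xhat) - (η / β) • u k := by rw [hy k]; abel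
  have e4 : x (k + 1) - y k = (η / β) • u k - η • F (y k) := by
    rw [hx k, hy k]; abel
  have e5 : x (k + 1) - x k = -(η • F (y k)) := by rw [hx k]; abel
  rw [e1, e2, e3, e4, e5, norm_neg, norm_neg]
  exact geg_aux (x k - xhat) (F (y k)) (u k) η β γ hβ0 hγ
end

section
/- Let F : ℝ^p → ℝ^p be L-Lipschitz continuous (‖Fx - Fy‖ ≤ L‖x - y‖ for all x, y) and suppose there exist x* with F(x*) = 0 and ρ ≥ 0 such that ⟨Fx, x - x*⟩ ≥ -ρ‖Fx‖² for all x. Let (x^k, y^k, u^k) satisfy the GEG recursion y^k = x^k - (η/β) u^k, x^{k+1} = x^k - η F(y^k), with ‖Fx^k - u^k‖² ≤ κ₁‖Fx^k - Fy^{k-1}‖² + κ₂‖Fx^k - Fx^{k-1}‖² for constants κ₁, κ₂ ≥ 0. Define, for parameters γ > 0 and r > 0, the potential P_k := ‖x^k - x*‖² + (κ₁(1+r)L²η²/(rγ))‖x^k - y^{k-1}‖² + (κ₂(1+r)L²η²/(rγ))‖x^k - x^{k-1}‖². Then for any s > 0 and μ ∈ [0,1]: P_{k+1} ≤ P_k -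 (β - (1+r)L²η²/γ - 2μρ(1+s)/(sη))‖y^k - x^k‖² - (β - γ - κ₁(1+r)L²η²/(rγ) - 2μρ(1+s)/η)‖x^{k+1} - y^k‖² - (1 - β - κ₂(1+r)L²η²/(rγ) - 2(1-μ)ρ/η)‖x^{k+1} - x^k‖². -/
open scoped RealInnerProductSpace

private lemma expand2 {V : Type*} [NormedAddCommGroup V] [InnerProductSpace ℝ V]
    (b c : V) (sb sc : ℝ) :
    ‖sb • b + sc • c‖ ^ 2 = sb ^ 2 * ‖b‖ ^ 2 + sc ^ 2 * ‖c‖ ^ 2 + 2 * sb * sc * ⟪b, c⟫ := by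
  rw [norm_add_sq_real, norm_smul, norm_smul, real_inner_smul_left, real_inner_smul_right]
  simp only [Real.norm_eq_abs, mul_pow, sq_abs]
  ring

private lemma expand3 {V : Type*} [NormedAddCommGroup V] [InnerProductSpace ℝ V]
    (a b c : V) (sb sc : ℝ) :
    ‖a + sb • b + sc • c‖ ^ 2 = ‖a‖ ^ 2 + sb ^ 2 * ‖b‖ ^ 2 + sc ^ 2 * ‖c‖ ^ 2
      + 2 * sb * ⟪a, b⟫ + 2 * sc * ⟪a, c⟫ + 2 * sb * sc * ⟪b, c⟫ := by
  rw [add_assoc, norm_add_sq_real, expand2, inner_add_right, real_inner_smul_right,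
    real_inner_smul_right]
  ring

private lemma sq_le_sq_of_le {a c : ℝ} (ha : 0 ≤ a) (h : a ≤ c) : a ^ 2 ≤ c ^ 2 :=
  pow_le_pow_left₀ ha h 2

private lemma aux_youngr (r a b : ℝ) :
    r * (a + b) ^ 2 ≤ r * (1 + r) * a ^ 2 + (1 + r) * b ^ 2 := by
  nlinarith [sq_nonneg (r * a - b)]

private lemma aux_young (β s E Yn τ : ℝ) (hs : 0 < s) (hE : 0 ≤ E) (hYn : 0 ≤ Yn)
    (hCS : τ ^ 2 ≤ E * Yn) :
    E + β ^ 2 * Yn - 2 * β * τ ≤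
      (1 + s) * (E + (1 - β) ^ 2 * Yn + 2 * (1 - β) * τ) + (1 + s) / s * Yn := by
  have hc2 : (τ + (1 - β) * Yn) ^ 2 ≤ (E + (1 - β) ^ 2 * Yn + 2 * (1 - β) * τ) * Yn := by
    nlinarith
  have hS : s * (E + β ^ 2 * Yn - 2 * β * τ) ≤
      s * ((1 + s) * (E + (1 - β) ^ 2 * Yn + 2 * (1 - β) * τ) + (1 + s) / s * Yn) := by
    have hss : s * ((1 + s) / s * Yn) = (1 + s) * Yn := by
      field_simp
    rw [mul_add, hss]
    rcases eq_or_lt_of_le hYn with h0 | h0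
    · have hτ0 : τ = 0 := by nlinarith [sq_nonneg τ]
      rw [hτ0, ← h0]
      nlinarith [mul_nonneg (mul_nonneg hs.le hs.le) hE, mul_nonneg hs.le hE]
    · nlinarith [sq_nonneg (s * (τ + (1 - β) * Yn) + Yn),
        mul_nonneg (sq_nonneg s) (sub_nonneg.mpr hc2), h0, mul_pos hs hs]
  exact le_of_mul_le_mul_left hS hs

private lemma aux_g (β γ E Yn τ : ℝ) (hE : 0 ≤ E) (hYn : 0 ≤ Yn) (hCS : τ ^ 2 ≤ E * Yn) :
    0 ≤ (1 - γ) ^ 2 * E - 2 * γ * (1 - β) * (1 - γ) * τ + γ ^ 2 * (1 - β) ^ 2 * Yn := by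
  rcases eq_or_lt_of_le hYn with h0 | h0
  · have hτ0 : τ = 0 := by nlinarith [sq_nonneg τ]
    rw [hτ0, ← h0]
    nlinarith [mul_nonneg (sq_nonneg (1 - γ)) hE]
  · nlinarith [sq_nonneg ((1 - γ) * τ - γ * (1 - β) * Yn),
      mul_nonneg (sq_nonneg (1 - γ)) (sub_nonneg.mpr hCS), h0]

private lemma aux_det (β γ M Q E Yn τ : ℝ) (hγ : 0 < γ) (hE : 0 ≤ E) (hYn : 0 ≤ Yn)
    (hCS : τ ^ 2 ≤ E * Yn) (hEQ : E ≤ M * Yn + γ * Q) :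
    (2 - γ) * E + 2 * (1 - β) * (1 - γ) * τ - γ * (1 - β) ^ 2 * Yn - M / γ * Yn ≤ Q := by
  have hG := aux_g β γ E Yn τ hE hYn hCS
  have h2 : γ * ((2 - γ) * E + 2 * (1 - β) * (1 - γ) * τ - γ * (1 - β) ^ 2 * Yn
      - M / γ * Yn) ≤ γ * Q := by
    have hc : γ * (M / γ * Yn) = M * Yn := by
      field_simp
    nlinarith [hG, hEQ, hc]
  exact le_of_mul_le_mul_left h2 hγ

set_option maxHeartbeats 1000000 in
theorem geg_potential_descent {p : ℕ}
    (F : EuclideanSpace ℝ (Fin p) → EuclideanSpace ℝ (Fin p))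
    (L : ℝ) (hL : ∀ a b, ‖F a - F b‖ ≤ L * ‖a - b‖)
    (xs : EuclideanSpace ℝ (Fin p)) (hxs : F xs = 0)
    (ρ : ℝ) (hρ : 0 ≤ ρ)
    (hwm : ∀ z, -ρ * ‖F z‖ ^ 2 ≤ ⟪F z, z - xs⟫)
    (η β : ℝ) (hη : 0 < η) (hβ0 : 0 < β) (hβ1 : β ≤ 1)
    (x y u : ℕ → EuclideanSpace ℝ (Fin p))
    (hy : ∀ k, y k = x k - (η / β) • u k)
    (hx : ∀ k, x (k + 1) = x k - η • F (y k))
    (κ₁ κ₂ : ℝ) (hκ₁ : 0 ≤ κ₁) (hκ₂ : 0 ≤ κ₂)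
    (hu : ∀ k, ‖F (x (k + 1)) - u (k + 1)‖ ^ 2 ≤
      κ₁ * ‖F (x (k + 1)) - F (y k)‖ ^ 2 + κ₂ * ‖F (x (k + 1)) - F (x k)‖ ^ 2)
    (γ r : ℝ) (hγ : 0 < γ) (hr : 0 < r)
    (P : ℕ → ℝ)
    (hP : ∀ k, P (k + 1) =
      ‖x (k + 1) - xs‖ ^ 2
        + (κ₁ * (1 + r) * L ^ 2 * η ^ 2 / (r * γ)) * ‖x (k + 1) - y k‖ ^ 2
        + (κ₂ * (1 + r) * L ^ 2 * η ^ 2 / (r * γ)) * ‖x (k + 1) - x k‖ ^ 2) :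
    ∀ s : ℝ, 0 < s → ∀ μ : ℝ, 0 ≤ μ → μ ≤ 1 → ∀ k : ℕ,
      P (k + 2) ≤ P (k + 1)
        - (β - (1 + r) * L ^ 2 * η ^ 2 / γ - 2 * μ * ρ * (1 + s) / (s * η)) *
            ‖y (k + 1) - x (k + 1)‖ ^ 2
        - (β - γ - κ₁ * (1 + r) * L ^ 2 * η ^ 2 / (r * γ) - 2 * μ * ρ * (1 + s) / η) *
            ‖x (k + 2) - y (k + 1)‖ ^ 2
        - (1 - β - κ₂ * (1 + r) * L ^ 2 * η ^ 2 / (r * γ) - 2 * (1 - μ) * ρ / η) *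
            ‖x (k + 2) - x (k + 1)‖ ^ 2 := by
  intro s hs μ hμ0 hμ1 k
  have hβne : β ≠ 0 := ne_of_gt hβ0
  have hηne : η ≠ 0 := ne_of_gt hη
  have hx2 : x (k + 2) = x (k + 1) - η • F (y (k + 1)) := hx (k + 1)
  have hP2 : P (k + 2) =
      ‖x (k + 2) - xs‖ ^ 2
        + (κ₁ * (1 + r) * L ^ 2 * η ^ 2 / (r * γ)) * ‖x (k + 2) - y (k + 1)‖ ^ 2
        + (κ₂ * (1 + r) * L ^ 2 * η ^ 2 / (r * γ)) * ‖x (k + 2) - x (k + 1)‖ ^ 2 := hP (k + 1)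
  rw [hP2, hP k]
  obtain ⟨e, he⟩ : ∃ v : EuclideanSpace ℝ (Fin p), v = η • (F (y (k + 1)) - u (k + 1)) :=
    ⟨_, rfl⟩
  obtain ⟨W, hWd⟩ : ∃ v : EuclideanSpace ℝ (Fin p), v = y (k + 1) - x (k + 1) := ⟨_, rfl⟩
  obtain ⟨Z, hZd⟩ : ∃ v : EuclideanSpace ℝ (Fin p), v = x (k + 1) - xs := ⟨_, rfl⟩
  rw [← hWd, ← hZd]
  have hyW : y (k + 1) = x (k + 1) + W := by rw [hWd]; abel
  have hβW : β • W = -(η • u (k + 1)) := by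
    have h1 : W = -((η / β) • u (k + 1)) := by rw [hWd, hy (k + 1)]; abel
    have h2 : β * (η / β) = η := by field_simp
    rw [h1, smul_neg, smul_smul, h2]
  have hFY : η • F (y (k + 1)) = e - β • W := by
    rw [he, hβW]; module
  have hv1 : x (k + 2) - xs = Z + (-1 : ℝ) • e + β • W := by
    rw [hx2, hFY, hZd]; module
  have hv2 : x (k + 2) - y (k + 1) = (-1 : ℝ) • e + (-(1 - β)) • W := by
    rw [hx2, hFY, hyW]; module
  have hv3 : x (k + 2) - x (k + 1) = (-1 : ℝ) • e + β • W := by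
    rw [hx2, hFY]; module
  have hv4 : η • F (y (k + 1)) = (1 : ℝ) • e + (-β) • W := by
    rw [hFY]; module
  have hZWv : y (k + 1) - xs = Z + W := by rw [hyW, hZd]; abel
  -- scalar expansions
  have h_e1 : ‖x (k + 2) - xs‖ ^ 2 = ‖Z‖ ^ 2 + ‖e‖ ^ 2 + β ^ 2 * ‖W‖ ^ 2
      - 2 * ⟪Z, e⟫ + 2 * β * ⟪Z, W⟫ - 2 * β * ⟪e, W⟫ := by
    rw [hv1, expand3]; ring
  have h_e2 : ‖x (k + 2) - y (k + 1)‖ ^ 2 =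
      ‖e‖ ^ 2 + (1 - β) ^ 2 * ‖W‖ ^ 2 + 2 * (1 - β) * ⟪e, W⟫ := by
    rw [hv2, expand2]; ring
  have h_e3 : ‖x (k + 2) - x (k + 1)‖ ^ 2 =
      ‖e‖ ^ 2 + β ^ 2 * ‖W‖ ^ 2 - 2 * β * ⟪e, W⟫ := by
    rw [hv3, expand2]; ring
  have h_nf : η ^ 2 * ‖F (y (k + 1))‖ ^ 2 =
      ‖e‖ ^ 2 + β ^ 2 * ‖W‖ ^ 2 - 2 * β * ⟪e, W⟫ := by
    have h1 : ‖η • F (y (k + 1))‖ ^ 2 =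
        ‖e‖ ^ 2 + β ^ 2 * ‖W‖ ^ 2 - 2 * β * ⟪e, W⟫ := by
      rw [hv4, expand2]; ring
    rw [norm_smul, Real.norm_eq_abs, abs_of_pos hη, mul_pow] at h1
    exact h1
  have h_ip : η * ⟪F (y (k + 1)), y (k + 1) - xs⟫ =
      ⟪Z, e⟫ + ⟪e, W⟫ - β * ⟪Z, W⟫ - β * ‖W‖ ^ 2 := by
    rw [← real_inner_smul_left, hv4, hZWv]
    simp only [inner_add_left, inner_add_right, real_inner_smul_left, one_smul, smul_add]
    rw [real_inner_comm e Z, real_inner_comm W Z, real_inner_self_eq_norm_sq]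
    ring
  -- Cauchy-Schwarz
  have h_CS : ⟪e, W⟫ ^ 2 ≤ ‖e‖ ^ 2 * ‖W‖ ^ 2 := by
    have h := abs_real_inner_le_norm e W
    have h2 : ⟪e, W⟫ ^ 2 ≤ (‖e‖ * ‖W‖) ^ 2 := by
      rw [← sq_abs]
      exact sq_le_sq_of_le (abs_nonneg _) h
    calc ⟪e, W⟫ ^ 2 ≤ (‖e‖ * ‖W‖) ^ 2 := h2
      _ = ‖e‖ ^ 2 * ‖W‖ ^ 2 := by ring
  have h_E0 : (0 : ℝ) ≤ ‖e‖ ^ 2 := by positivity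
  have h_Yn0 : (0 : ℝ) ≤ ‖W‖ ^ 2 := by positivity
  -- weak Minty step
  have h_WM : -(ρ / η) * (‖e‖ ^ 2 + β ^ 2 * ‖W‖ ^ 2 - 2 * β * ⟪e, W⟫) ≤
      ⟪Z, e⟫ + ⟪e, W⟫ - β * ⟪Z, W⟫ - β * ‖W‖ ^ 2 := by
    have h0 := hwm (y (k + 1))
    have h1 : η * (-ρ * ‖F (y (k + 1))‖ ^ 2) ≤ η * ⟪F (y (k + 1)), y (k + 1) - xs⟫ :=
      mul_le_mul_of_nonneg_left h0 hη.le
    rw [h_ip] at h1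
    have h2 : -(ρ / η) * (‖e‖ ^ 2 + β ^ 2 * ‖W‖ ^ 2 - 2 * β * ⟪e, W⟫) =
        η * (-ρ * ‖F (y (k + 1))‖ ^ 2) := by
      rw [← h_nf]; field_simp
    linarith only [h1, h2]
  have hStep1 : ‖x (k + 2) - xs‖ ^ 2 ≤ ‖Z‖ ^ 2 + ‖e‖ ^ 2 + β ^ 2 * ‖W‖ ^ 2
      + 2 * ⟪e, W⟫ - 2 * β * ⟪e, W⟫ - 2 * β * ‖W‖ ^ 2
      + (2 * ρ / η) * (‖e‖ ^ 2 + β ^ 2 * ‖W‖ ^ 2 - 2 * β * ⟪e, W⟫) := by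
    have h1 := h_e1
    have h2 := h_WM
    ring_nf at h1 h2 ⊢
    linarith only [h1, h2]
  -- Young inequality with s
  have hYoung := aux_young β s (‖e‖ ^ 2) (‖W‖ ^ 2) ⟪e, W⟫ hs h_E0 h_Yn0 h_CS
  have hStep2 : (2 * μ * ρ / η) * (‖e‖ ^ 2 + β ^ 2 * ‖W‖ ^ 2 - 2 * β * ⟪e, W⟫) ≤
      (2 * μ * ρ / η) *
        ((1 + s) * (‖e‖ ^ 2 + (1 - β) ^ 2 * ‖W‖ ^ 2 + 2 * (1 - β) * ⟪e, W⟫)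
          + (1 + s) / s * ‖W‖ ^ 2) := by
    apply mul_le_mul_of_nonneg_left hYoung
    apply div_nonneg _ hη.le
    have h2μ : (0 : ℝ) ≤ 2 * μ := by linarith
    exact mul_nonneg h2μ hρ
  -- bound on ‖e‖²
  have hlam2 : ‖F (y (k + 1)) - F (x (k + 1))‖ ^ 2 ≤ L ^ 2 * ‖W‖ ^ 2 := by
    have h1 := hL (y (k + 1)) (x (k + 1))
    rw [← hWd] at h1
    calc ‖F (y (k + 1)) - F (x (k + 1))‖ ^ 2 ≤ (L * ‖W‖) ^ 2 :=
          sq_le_sq_of_le (norm_nonneg _) h1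
      _ = L ^ 2 * ‖W‖ ^ 2 := by ring
  have hq1 : ‖F (x (k + 1)) - F (y k)‖ ^ 2 ≤ L ^ 2 * ‖x (k + 1) - y k‖ ^ 2 := by
    calc ‖F (x (k + 1)) - F (y k)‖ ^ 2 ≤ (L * ‖x (k + 1) - y k‖) ^ 2 :=
          sq_le_sq_of_le (norm_nonneg _) (hL _ _)
      _ = L ^ 2 * ‖x (k + 1) - y k‖ ^ 2 := by ring
  have hq2 : ‖F (x (k + 1)) - F (x k)‖ ^ 2 ≤ L ^ 2 * ‖x (k + 1) - x k‖ ^ 2 := by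
    calc ‖F (x (k + 1)) - F (x k)‖ ^ 2 ≤ (L * ‖x (k + 1) - x k‖) ^ 2 :=
          sq_le_sq_of_le (norm_nonneg _) (hL _ _)
      _ = L ^ 2 * ‖x (k + 1) - x k‖ ^ 2 := by ring
  have hδ2 : ‖F (x (k + 1)) - u (k + 1)‖ ^ 2 ≤
      κ₁ * L ^ 2 * ‖x (k + 1) - y k‖ ^ 2 + κ₂ * L ^ 2 * ‖x (k + 1) - x k‖ ^ 2 := by
    linarith only [hu k, mul_le_mul_of_nonneg_left hq1 hκ₁, mul_le_mul_of_nonneg_left hq2 hκ₂]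
  have hEd : ‖e‖ ^ 2 = η ^ 2 * ‖F (y (k + 1)) - u (k + 1)‖ ^ 2 := by
    rw [he, norm_smul, Real.norm_eq_abs, abs_of_pos hη, mul_pow]
  have hT : ‖F (y (k + 1)) - u (k + 1)‖ ≤
      ‖F (y (k + 1)) - F (x (k + 1))‖ + ‖F (x (k + 1)) - u (k + 1)‖ :=
    norm_sub_le_norm_sub_add_norm_sub _ _ _
  have hd2 : ‖F (y (k + 1)) - u (k + 1)‖ ^ 2 ≤
      (‖F (y (k + 1)) - F (x (k + 1))‖ + ‖F (x (k + 1)) - u (k + 1)‖) ^ 2 :=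
    sq_le_sq_of_le (norm_nonneg _) hT
  have h_rE : r * ‖e‖ ^ 2 ≤ r * (1 + r) * L ^ 2 * η ^ 2 * ‖W‖ ^ 2
      + κ₁ * (1 + r) * L ^ 2 * η ^ 2 * ‖x (k + 1) - y k‖ ^ 2
      + κ₂ * (1 + r) * L ^ 2 * η ^ 2 * ‖x (k + 1) - x k‖ ^ 2 := by
    have hA : η ^ 2 * (r * ‖F (y (k + 1)) - u (k + 1)‖ ^ 2) ≤
        η ^ 2 * (r * (‖F (y (k + 1)) - F (x (k + 1))‖ + ‖F (x (k + 1)) - u (k + 1)‖) ^ 2) :=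
      mul_le_mul_of_nonneg_left (mul_le_mul_of_nonneg_left hd2 hr.le) (sq_nonneg η)
    have hB : η ^ 2 * (r * (‖F (y (k + 1)) - F (x (k + 1))‖ + ‖F (x (k + 1)) - u (k + 1)‖) ^ 2) ≤
        η ^ 2 * (r * (1 + r) * ‖F (y (k + 1)) - F (x (k + 1))‖ ^ 2
          + (1 + r) * ‖F (x (k + 1)) - u (k + 1)‖ ^ 2) :=
      mul_le_mul_of_nonneg_left (aux_youngr r _ _) (sq_nonneg η)
    have hC : η ^ 2 * (r * (1 + r) * ‖F (y (k + 1)) - F (x (k + 1))‖ ^ 2) ≤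
        η ^ 2 * (r * (1 + r) * (L ^ 2 * ‖W‖ ^ 2)) := by
      apply mul_le_mul_of_nonneg_left _ (sq_nonneg η)
      apply mul_le_mul_of_nonneg_left hlam2
      positivity
    have hD : η ^ 2 * ((1 + r) * ‖F (x (k + 1)) - u (k + 1)‖ ^ 2) ≤
        η ^ 2 * ((1 + r) * (κ₁ * L ^ 2 * ‖x (k + 1) - y k‖ ^ 2
          + κ₂ * L ^ 2 * ‖x (k + 1) - x k‖ ^ 2)) := by
      apply mul_le_mul_of_nonneg_left _ (sq_nonneg η)
      apply mul_le_mul_of_nonneg_left hδ2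
      positivity
    have hEd2 : r * ‖e‖ ^ 2 = r * (η ^ 2 * ‖F (y (k + 1)) - u (k + 1)‖ ^ 2) := by rw [hEd]
    ring_nf at hA hB hC hD hEd2 ⊢
    linarith only [hA, hB, hC, hD, hEd2]
  have hγQ : r * (γ * ((κ₁ * (1 + r) * L ^ 2 * η ^ 2 / (r * γ)) * ‖x (k + 1) - y k‖ ^ 2
      + (κ₂ * (1 + r) * L ^ 2 * η ^ 2 / (r * γ)) * ‖x (k + 1) - x k‖ ^ 2)) =
      κ₁ * (1 + r) * L ^ 2 * η ^ 2 * ‖x (k + 1) - y k‖ ^ 2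
      + κ₂ * (1 + r) * L ^ 2 * η ^ 2 * ‖x (k + 1) - x k‖ ^ 2 := by
    field_simp
  have h_E : ‖e‖ ^ 2 ≤ (1 + r) * L ^ 2 * η ^ 2 * ‖W‖ ^ 2
      + γ * ((κ₁ * (1 + r) * L ^ 2 * η ^ 2 / (r * γ)) * ‖x (k + 1) - y k‖ ^ 2
        + (κ₂ * (1 + r) * L ^ 2 * η ^ 2 / (r * γ)) * ‖x (k + 1) - x k‖ ^ 2) := by
    have h2 : r * ‖e‖ ^ 2 ≤ r * ((1 + r) * L ^ 2 * η ^ 2 * ‖W‖ ^ 2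
        + γ * ((κ₁ * (1 + r) * L ^ 2 * η ^ 2 / (r * γ)) * ‖x (k + 1) - y k‖ ^ 2
          + (κ₂ * (1 + r) * L ^ 2 * η ^ 2 / (r * γ)) * ‖x (k + 1) - x k‖ ^ 2)) := by
      have h3 := h_rE
      have h4 := hγQ
      ring_nf at h3 h4 ⊢
      linarith only [h3, h4]
    exact le_of_mul_le_mul_left h2 hr
  have hDet := aux_det β γ ((1 + r) * L ^ 2 * η ^ 2)
    ((κ₁ * (1 + r) * L ^ 2 * η ^ 2 / (r * γ)) * ‖x (k + 1) - y k‖ ^ 2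
      + (κ₂ * (1 + r) * L ^ 2 * η ^ 2 / (r * γ)) * ‖x (k + 1) - x k‖ ^ 2)
    (‖e‖ ^ 2) (‖W‖ ^ 2) ⟪e, W⟫ hγ h_E0 h_Yn0 h_CS h_E
  -- final assembly
  rw [h_e1, h_e2, h_e3]
  have f1 := h_WM
  have f4 := hStep2
  have f5 := hDet
  ring_nf at f1 f4 f5 ⊢
  linarith only [f1, f4, f5]
end

section
/- Let F : ℝ^p → ℝ^p be L-Lipschitz continuous and ρ-co-hypomonotone, i.e. ⟨Fx - Fy, x - y⟩ ≥ -ρ‖Fx - Fy‖² for all x, y with ρ ≥ 0. Suppose (x^k, y^k, u^k) satisfy y^k = x^k - (η/β)u^k and x^{k+1} = x^k - η F(y^k) with η > 0, β ∈ (0,1]. Then for any s > 0, ω ≥ 0, ω̂ ≥ 0: ‖Fx^{k+1}‖² + ω‖Fx^{k+1} - Fy^k‖² + ω̂‖Fx^{k+1} - Fx^k‖² ≤ ‖Fx^k‖² - [1 - ((1+s)/s)(ω̂ + 2ρ/η)]‖Fy^k - Fx^k‖² + [1 + ω + (1+s)(ω̂ + 2ρ/η)](L²η²/β²)‖β Fy^k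 - u^k‖². -/
open scoped RealInnerProductSpace

set_option maxHeartbeats 1000000

theorem geg_operator_norm_estimate {p : ℕ}
    (F : EuclideanSpace ℝ (Fin p) → EuclideanSpace ℝ (Fin p))
    (L : ℝ) (hL : ∀ a b, ‖F a - F b‖ ≤ L * ‖a - b‖)
    (ρ : ℝ) (hρ : 0 ≤ ρ)
    (hch : ∀ a b, -ρ * ‖F a - F b‖ ^ 2 ≤ ⟪F a - F b, a - b⟫)
    (η β : ℝ) (hη : 0 < η) (hβ0 : 0 < β) (hβ1 : β ≤ 1)
    (x y u : ℕ → EuclideanSpace ℝ (Fin p))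
    (hy : ∀ k, y k = x k - (η / β) • u k)
    (hx : ∀ k, x (k + 1) = x k - η • F (y k)) :
    ∀ s : ℝ, 0 < s → ∀ ω : ℝ, 0 ≤ ω → ∀ ω' : ℝ, 0 ≤ ω' → ∀ k : ℕ,
      ‖F (x (k + 1))‖ ^ 2 + ω * ‖F (x (k + 1)) - F (y k)‖ ^ 2
          + ω' * ‖F (x (k + 1)) - F (x k)‖ ^ 2 ≤
        ‖F (x k)‖ ^ 2
          - (1 - ((1 + s) / s) * (ω' + 2 * ρ / η)) * ‖F (y k) - F (x k)‖ ^ 2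
          + (1 + ω + (1 + s) * (ω' + 2 * ρ / η)) * (L ^ 2 * η ^ 2 / β ^ 2) *
              ‖β • F (y k) - u k‖ ^ 2 := by
  intro s hs ω hω ω' hω' k
  set A := F (x k) with hA
  set B := F (y k) with hB
  set C := F (x (k + 1)) with hC
  -- key identity
  have h1 : ‖C‖ ^ 2 - ‖A‖ ^ 2 = ‖C - B‖ ^ 2 - ‖B - A‖ ^ 2 + 2 * ⟪C - A, B⟫ := by
    rw [norm_sub_rev B A, @norm_sub_sq_real, @norm_sub_sq_real, inner_sub_left]
    ring
  -- co-hypomonotonicity bound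
  have h2 : 2 * ⟪C - A, B⟫ ≤ 2 * ρ / η * ‖C - A‖ ^ 2 := by
    have hm := hch (x (k + 1)) (x k)
    have hd : x (k + 1) - x k = -(η • B) := by rw [hx]; abel
    rw [hd, inner_neg_right, real_inner_smul_right] at hm
    have key : η * ⟪C - A, B⟫ ≤ ρ * ‖C - A‖ ^ 2 := by linarith
    rw [div_mul_eq_mul_div, le_div_iff₀ hη]
    nlinarith [key]
  -- Lipschitz bound
  have h3 : ‖C - B‖ ^ 2 ≤ L ^ 2 * η ^ 2 / β ^ 2 * ‖β • B - u k‖ ^ 2 := by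
    have hxk : x (k + 1) = x k - η • B := hx k
    have hyk : y k = x k - (η / β) • u k := hy k
    have hd : x (k + 1) - y k = -((η / β) • (β • B - u k)) := by
      rw [hxk, hyk, smul_sub, smul_smul, div_mul_cancel₀ _ (ne_of_gt hβ0)]
      abel
    have hn : ‖x (k + 1) - y k‖ = η / β * ‖β • B - u k‖ := by
      rw [hd, norm_neg, norm_smul, Real.norm_eq_abs,
        abs_of_pos (div_pos hη hβ0)]
    have hb := hL (x (k + 1)) (y k)
    rw [hn] at hb
    have := pow_le_pow_left₀ (norm_nonneg (C - B)) hb 2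
    calc ‖C - B‖ ^ 2 ≤ (L * (η / β * ‖β • B - u k‖)) ^ 2 := this
      _ = L ^ 2 * η ^ 2 / β ^ 2 * ‖β • B - u k‖ ^ 2 := by ring
  -- Young-type inequality
  have h4 : ‖C - A‖ ^ 2 ≤ (1 + s) * ‖C - B‖ ^ 2 + ((1 + s) / s) * ‖B - A‖ ^ 2 := by
    have htri : ‖C - A‖ ≤ ‖C - B‖ + ‖B - A‖ := norm_sub_le_norm_sub_add_norm_sub C B A
    have hsq : ‖C - A‖ ^ 2 ≤ (‖C - B‖ + ‖B - A‖) ^ 2 :=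
      pow_le_pow_left₀ (norm_nonneg _) htri 2
    have hy : 0 ≤ (s * ‖C - B‖ - ‖B - A‖) ^ 2 / s :=
      div_nonneg (sq_nonneg _) hs.le
    have hident : s * ‖C - B‖ ^ 2 + ‖B - A‖ ^ 2 / s - 2 * ‖C - B‖ * ‖B - A‖
        = (s * ‖C - B‖ - ‖B - A‖) ^ 2 / s := by
      field_simp
      ring
    have hexp : ((1 + s) / s) * ‖B - A‖ ^ 2 = ‖B - A‖ ^ 2 / s + ‖B - A‖ ^ 2 := by
      field_simp
    nlinarith [hsq, hy, hident, hexp]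
  -- combine
  have hc : 0 ≤ ω' + 2 * ρ / η := by positivity
  have hcc : 0 ≤ (ω' + 2 * ρ / η) * (1 + s) := by positivity
  have h1ω : (0:ℝ) ≤ 1 + ω := by linarith
  have h5 := mul_le_mul_of_nonneg_left h4 hc
  have h6 := mul_le_mul_of_nonneg_left h3 h1ω
  have h7 := mul_le_mul_of_nonneg_left h3 hcc
  linarith [h1, h2, h5, h6, h7]
end

section
/- Let F : ℝ^p → ℝ^p be L-Lipschitz continuous with a zero x*, and suppose ⟨Fx, x - x*⟩ ≥ -ρ‖Fx‖² for all x, with L·ρ ≤ β²/16 for some β ∈ (0,1]. Let the sequence be generated by the extragradient method: y^k := x^k - (η/β)Fx^k, x^{k+1} := x^k - η F(y^k), with stepsize η satisfying (β - √(β² - 16Lρ))/(2L) < η < (β + √(β² - 16Lρ))/(2L). Then C₁ := β - Lη - 4ρ/η > 0 and for every K ≥ 0: min_{0≤k≤K} ‖Fx^k‖² ≤ (1/(K+1)) Σ_{k=0}^K ‖Fx^k‖² ≤ β²‖x⁰ - x*‖²/(C₁η²(K+1)). -/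
/-!
Expanding `‖x^{k+1} - x*‖²` and applying the weak Minty inequality at the extrapolated point
`y^k` gives an inequality in `a = ‖Fx^k‖`, `b = ‖Fy^k‖` and `c = ‖Fx^k - Fy^k‖`, while Lipschitz
continuity gives `βc ≤ Lηa` and `b ≤ a + c`. On the open stepsize interval the quadratic
`Lη² - βη + 4ρ` is negative, which is exactly `C₁ > 0`, and these bounds then turn the expansion
into the descent estimate `‖x^{k+1} - x*‖² + (C₁η²/β²)‖Fx^k‖² ≤ ‖x^k - x*‖²`. Telescoping bounds
the sum of the `‖Fx^k‖²`, and the minimum is at most the average.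
-/

open scoped RealInnerProductSpace
open Finset

theorem quadratic_neg_of_between_roots {a b c x : ℝ} (ha : 0 < a)
    (h₁ : (-b - √(discrim a b c)) / (2 * a) < x) (h₂ : x < (-b + √(discrim a b c)) / (2 * a)) :
    a * (x * x) + b * x + c < 0 := by
  have h2a : 0 < 2 * a := by positivity
  rw [div_lt_iff₀ h2a] at h₁
  rw [lt_div_iff₀ h2a] at h₂
  have hD : √(discrim a b c) ^ 2 = discrim a b c :=
    Real.sq_sqrt (Real.sqrt_pos.1 (by linarith)).le
  have hsq : (2 * a * x + b) ^ 2 < √(discrim a b c) ^ 2 := sq_lt_sq' (by linarith) (by linarith)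
  rw [hD, discrim] at hsq
  nlinarith

theorem pos_and_sub_pos_of_quadratic_neg {L ρ β η : ℝ} (hL0 : 0 ≤ L) (hρ : 0 ≤ ρ) (hβ0 : 0 < β)
    (hquad : L * (η * η) + -β * η + 4 * ρ < 0) : 0 < η ∧ 0 < β - L * η - 4 * ρ / η := by
  have hη : 0 < η := by
    by_contra! hη
    nlinarith [mul_nonneg hL0 (mul_self_nonneg η), mul_nonneg hβ0.le (neg_nonneg.2 hη)]
  refine ⟨hη, ?_⟩
  rw [show β - L * η - 4 * ρ / η = -(L * (η * η) + -β * η + 4 * ρ) / η by field_simp; ring]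
  exact div_pos (by linarith) hη

theorem sq_add_half_mul_sq_le {a b c s t : ℝ} (ha : 0 ≤ a) (hb : 0 ≤ b) (hc : 0 ≤ c)
    (hs : 0 ≤ s) (ht : 0 ≤ t) (hst : s + t ≤ 1) (hca : c ≤ s * a) (hbac : b ≤ a + c) :
    c ^ 2 + t / 2 * b ^ 2 ≤ (s + t) * a ^ 2 := by
  have hc2 : c ^ 2 ≤ s ^ 2 * a ^ 2 := by nlinarith
  have hb2 : b ^ 2 ≤ (1 + s) ^ 2 * a ^ 2 := by nlinarith
  nlinarith [mul_nonneg (mul_nonneg hs (sub_nonneg.2 hst)) (sq_nonneg a),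
    mul_nonneg (mul_nonneg ht (by nlinarith : 0 ≤ 1 - s ^ 2)) (sq_nonneg a)]

theorem add_sum_range_le_of_succ_add_le {u v : ℕ → ℝ} (h : ∀ k, u (k + 1) + v k ≤ u k)
    (n : ℕ) : u n + ∑ k ∈ range n, v k ≤ u 0 := by
  induction n with
  | zero => simp
  | succ n ih => rw [sum_range_succ]; linarith [h n]

theorem exists_le_average_range (f : ℕ → ℝ) (K : ℕ) :
    ∃ k ≤ K, f k ≤ 1 / ((K : ℝ) + 1) * ∑ j ∈ range (K + 1), f j := by
  obtain ⟨k, hk, hle⟩ := exists_le_of_sum_le (s := range (K + 1)) ⟨0, by simp⟩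
    (f := f) (g := fun _ ↦ 1 / ((K : ℝ) + 1) * ∑ j ∈ range (K + 1), f j)
    (le_of_eq (by rw [sum_const, card_range, nsmul_eq_mul]; push_cast; field_simp))
  exact ⟨k, Nat.lt_succ_iff.1 (mem_range.1 hk), hle⟩

section Extragradient

variable {E : Type*} [NormedAddCommGroup E] [InnerProductSpace ℝ E]
  {F : E → E} {L ρ β η : ℝ} {x y x' xs : E}

theorem eg_step_norm_sq_eq (hy : y = x - (η / β) • F x) (hx' : x' = x - η • F y) :
    ‖x' - xs‖ ^ 2 = ‖x - xs‖ ^ 2 - η ^ 2 / β * (‖F x‖ ^ 2 + ‖F y‖ ^ 2 - ‖F x - F y‖ ^ 2)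
      - 2 * η * ⟪F y, y - xs⟫ + η ^ 2 * ‖F y‖ ^ 2 := by
  have hinner : ⟪x - xs, η • F y⟫ = η * (η / β * ⟪F x, F y⟫ + ⟪F y, y - xs⟫) := by
    rw [show x - xs = (η / β) • F x + (y - xs) by rw [hy]; abel, real_inner_smul_right,
      inner_add_left, real_inner_smul_left, real_inner_comm (F y) (y - xs),
      real_inner_comm (F y) (F x)]
  rw [hx', show x - η • F y - xs = (x - xs) - η • F y by abel, norm_sub_sq_real, hinner,
    norm_smul, mul_pow, Real.norm_eq_abs, sq_abs, norm_sub_sq_real (F x) (F y)]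
  field_simp
  ring

theorem eg_step_descent (hL0 : 0 ≤ L) (hL : ‖F x - F y‖ ≤ L * ‖x - y‖)
    (hwm : -ρ * ‖F y‖ ^ 2 ≤ ⟪F y, y - xs⟫) (hρ : 0 ≤ ρ) (hβ0 : 0 < β) (hβ1 : β ≤ 1) (hη : 0 < η)
    (hC : 0 ≤ β - L * η - 4 * ρ / η) (hy : y = x - (η / β) • F x) (hx' : x' = x - η • F y) :
    ‖x' - xs‖ ^ 2 + (β - L * η - 4 * ρ / η) * η ^ 2 / β ^ 2 * ‖F x‖ ^ 2 ≤ ‖x - xs‖ ^ 2 := by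
  set a := ‖F x‖
  set b := ‖F y‖
  set c := ‖F x - F y‖
  -- In these units `C₁η²/β² = (η²/β)(1 - s - t)` and `2ηρ = (η²/β)(β²t/2)`.
  set s := L * η / β
  set t := 4 * ρ / (β * η)
  have hca : c ≤ s * a := by
    have hxy : ‖x - y‖ = η / β * a := by
      rw [hy, sub_sub_cancel, norm_smul, Real.norm_of_nonneg (by positivity)]
    calc c ≤ L * (η / β * a) := hxy ▸ hL
      _ = s * a := by ring
  have hst : s + t ≤ 1 := by
    rw [show s + t = (L * η + 4 * ρ / η) / β by simp only [s, t]; field_simp, div_le_one hβ0]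
    linarith
  have hscalar := sq_add_half_mul_sq_le (norm_nonneg _) (norm_nonneg _) (norm_nonneg _)
    (by positivity) (by positivity) hst hca (norm_le_norm_add_norm_sub (F x) (F y))
  have hexpand : -(η ^ 2 / β) * (a ^ 2 + b ^ 2 - c ^ 2) + 2 * η * ρ * b ^ 2 + η ^ 2 * b ^ 2
      + (β - L * η - 4 * ρ / η) * η ^ 2 / β ^ 2 * a ^ 2
      = η ^ 2 / β * (c ^ 2 + β ^ 2 * (t / 2) * b ^ 2 - (s + t) * a ^ 2)
        - η ^ 2 / β * (1 - β) * b ^ 2 := by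
    simp only [s, t]; field_simp; ring
  have hβ2 : β ^ 2 * (t / 2) * b ^ 2 ≤ t / 2 * b ^ 2 := by
    have : β ^ 2 ≤ 1 := by nlinarith
    nlinarith [mul_nonneg (by positivity : 0 ≤ t / 2) (sq_nonneg b)]
  have hnonpos := mul_nonpos_of_nonneg_of_nonpos (by positivity : 0 ≤ η ^ 2 / β)
    (by linarith : c ^ 2 + β ^ 2 * (t / 2) * b ^ 2 - (s + t) * a ^ 2 ≤ 0)
  have hslack : 0 ≤ η ^ 2 / β * (1 - β) * b ^ 2 := by
    have := sub_nonneg.2 hβ1; positivity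
  have hminty : -(2 * η * ⟪F y, y - xs⟫) ≤ 2 * η * ρ * b ^ 2 := by
    linarith [mul_le_mul_of_nonneg_left hwm (by positivity : 0 ≤ 2 * η)]
  rw [eg_step_norm_sq_eq hy hx']
  linarith

end Extragradient

theorem eg_best_iterate_rate_general {p : ℕ}
    (F : EuclideanSpace ℝ (Fin p) → EuclideanSpace ℝ (Fin p))
    (L : ℝ) (hL0 : 0 < L) (hL : ∀ a b, ‖F a - F b‖ ≤ L * ‖a - b‖)
    (xs : EuclideanSpace ℝ (Fin p))
    (ρ : ℝ) (hρ : 0 ≤ ρ)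
    (hwm : ∀ z, -ρ * ‖F z‖ ^ 2 ≤ ⟪F z, z - xs⟫)
    (β : ℝ) (hβ0 : 0 < β) (hβ1 : β ≤ 1)
    (η : ℝ)
    (hη₁ : (β - Real.sqrt (β ^ 2 - 16 * L * ρ)) / (2 * L) < η)
    (hη₂ : η < (β + Real.sqrt (β ^ 2 - 16 * L * ρ)) / (2 * L))
    (x y : ℕ → EuclideanSpace ℝ (Fin p))
    (hy : ∀ k, y k = x k - (η / β) • F (x k))
    (hx : ∀ k, x (k + 1) = x k - η • F (y k)) :
    0 < β - L * η - 4 * ρ / η ∧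
      ∀ K : ℕ,
        (∃ k ≤ K, ‖F (x k)‖ ^ 2 ≤
            (1 / ((K : ℝ) + 1)) * ∑ j ∈ range (K + 1), ‖F (x j)‖ ^ 2) ∧
        (1 / ((K : ℝ) + 1)) * ∑ k ∈ range (K + 1), ‖F (x k)‖ ^ 2 ≤
          β ^ 2 * ‖x 0 - xs‖ ^ 2 /
            ((β - L * η - 4 * ρ / η) * η ^ 2 * ((K : ℝ) + 1)) := by
  have hdisc : discrim L (-β) (4 * ρ) = β ^ 2 - 16 * L * ρ := by rw [discrim]; ring
  have hquad : L * (η * η) + -β * η + 4 * ρ < 0 :=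
    quadratic_neg_of_between_roots hL0 (by rwa [hdisc, neg_neg]) (by rwa [hdisc, neg_neg])
  obtain ⟨hη, hC⟩ := pos_and_sub_pos_of_quadratic_neg hL0.le hρ hβ0 hquad
  set C := β - L * η - 4 * ρ / η
  refine ⟨hC, fun K ↦ ⟨exists_le_average_range _ K, ?_⟩⟩
  have hsum := add_sum_range_le_of_succ_add_le (u := fun k ↦ ‖x k - xs‖ ^ 2)
    (v := fun k ↦ C * η ^ 2 / β ^ 2 * ‖F (x k)‖ ^ 2)
    (fun k ↦ eg_step_descent hL0.le (hL _ _) (hwm _) hρ hβ0 hβ1 hη hC.le (hy k) (hx k)) (K + 1)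
  rw [← mul_sum] at hsum
  calc 1 / ((K : ℝ) + 1) * ∑ k ∈ range (K + 1), ‖F (x k)‖ ^ 2
      = β ^ 2 * (C * η ^ 2 / β ^ 2 * ∑ k ∈ range (K + 1), ‖F (x k)‖ ^ 2) /
          (C * η ^ 2 * ((K : ℝ) + 1)) := by
        field_simp [hC.ne']
    _ ≤ β ^ 2 * ‖x 0 - xs‖ ^ 2 / (C * η ^ 2 * ((K : ℝ) + 1)) := by
        gcongr
        linarith [sq_nonneg ‖x (K + 1) - xs‖]

theorem eg_best_iterate_rate {p : ℕ}
    (F : EuclideanSpace ℝ (Fin p) → EuclideanSpace ℝ (Fin p))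
    (L : ℝ) (hL0 : 0 < L) (hL : ∀ a b, ‖F a - F b‖ ≤ L * ‖a - b‖)
    (xs : EuclideanSpace ℝ (Fin p)) (hxs : F xs = 0)
    (ρ : ℝ) (hρ : 0 ≤ ρ)
    (hwm : ∀ z, -ρ * ‖F z‖ ^ 2 ≤ ⟪F z, z - xs⟫)
    (β : ℝ) (hβ0 : 0 < β) (hβ1 : β ≤ 1)
    (hLρ : L * ρ ≤ β ^ 2 / 16)
    (η : ℝ)
    (hη₁ : (β - Real.sqrt (β ^ 2 - 16 * L * ρ)) / (2 * L) < η)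
    (hη₂ : η < (β + Real.sqrt (β ^ 2 - 16 * L * ρ)) / (2 * L))
    (x y : ℕ → EuclideanSpace ℝ (Fin p))
    (hy : ∀ k, y k = x k - (η / β) • F (x k))
    (hx : ∀ k, x (k + 1) = x k - η • F (y k)) :
    0 < β - L * η - 4 * ρ / η ∧
      ∀ K : ℕ,
        (∃ k ≤ K, ‖F (x k)‖ ^ 2 ≤
            (1 / ((K : ℝ) + 1)) * ∑ j ∈ range (K + 1), ‖F (x j)‖ ^ 2) ∧
        (1 / ((K : ℝ) + 1)) * ∑ k ∈ range (K + 1), ‖F (x k)‖ ^ 2 ≤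
          β ^ 2 * ‖x 0 - xs‖ ^ 2 /
            ((β - L * η - 4 * ρ / η) * η ^ 2 * ((K : ℝ) + 1)) :=
  eg_best_iterate_rate_general F L hL0 hL xs ρ hρ hwm β hβ0 hβ1 η hη₁ hη₂ x y hy hx
end

section
/- Let F : ℝ^p → ℝ^p be L-Lipschitz continuous and ρ-co-hypomonotone with F(x*) = 0 for some x*, and assume L·ρ ≤ 1/(16√2). Let the sequence be generated by the extragradient iteration y^k := x^k - η Fx^k, x^{k+1} := x^k - η F(y^k) (β = 1), with η satisfying (1 - √(1 - 16√2 Lρ))/(2√2 L) ≤ η ≤ (1 + √(1 - 16√2 Lρ))/(2√2 L). Then with ψ := 1 - 4ρ/η - (1 + 4ρ/η)L²η² ≥ 0, the sequence satisfies ‖Fx^{k+1}‖² ≤ ‖Fx^k‖² - ψ‖Fx^k - Fy^k‖² for all k; in particular (‖Fx^k‖) is nonincreasing. -/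
open scoped RealInnerProductSpace

set_option maxHeartbeats 1000000 in
theorem eg_last_iterate_monotone_decrease {p : ℕ}
    (F : EuclideanSpace ℝ (Fin p) → EuclideanSpace ℝ (Fin p))
    (L : ℝ) (hL0 : 0 < L) (hL : ∀ a b, ‖F a - F b‖ ≤ L * ‖a - b‖)
    (ρ : ℝ) (hρ : 0 ≤ ρ)
    (hch : ∀ a b, -ρ * ‖F a - F b‖ ^ 2 ≤ ⟪F a - F b, a - b⟫)
    (xs : EuclideanSpace ℝ (Fin p)) (hxs : F xs = 0)
    (hLρ : L * ρ ≤ 1 / (16 * Real.sqrt 2))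
    (η : ℝ)
    (hη₁ : (1 - Real.sqrt (1 - 16 * Real.sqrt 2 * L * ρ)) / (2 * Real.sqrt 2 * L) ≤ η)
    (hη₂ : η ≤ (1 + Real.sqrt (1 - 16 * Real.sqrt 2 * L * ρ)) / (2 * Real.sqrt 2 * L))
    (x y : ℕ → EuclideanSpace ℝ (Fin p))
    (hy : ∀ k, y k = x k - η • F (x k))
    (hx : ∀ k, x (k + 1) = x k - η • F (y k))
    (ψ : ℝ) (hψ : ψ = 1 - 4 * ρ / η - (1 + 4 * ρ / η) * L ^ 2 * η ^ 2) :
    0 ≤ ψ ∧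
      (∀ k : ℕ, ‖F (x (k + 1))‖ ^ 2 ≤ ‖F (x k)‖ ^ 2 - ψ * ‖F (x k) - F (y k)‖ ^ 2) ∧
      Antitone (fun k : ℕ => ‖F (x k)‖) := by
  have sqrt2_pos : (0:ℝ) < Real.sqrt 2 := Real.sqrt_pos.mpr (by norm_num)
  have sqrt2_sq : Real.sqrt 2 * Real.sqrt 2 = 2 := Real.mul_self_sqrt (by norm_num)
  have hcρ : 0 ≤ 16 * Real.sqrt 2 * L * ρ :=
    mul_nonneg (mul_nonneg (by positivity) hL0.le) hρ
  have h16 : 16 * Real.sqrt 2 * L * ρ ≤ 1 := by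
    have h := mul_le_mul_of_nonneg_left hLρ (by positivity : (0:ℝ) ≤ 16 * Real.sqrt 2)
    have h2 : 16 * Real.sqrt 2 * (1 / (16 * Real.sqrt 2)) = 1 := by
      field_simp
    linarith only [h, h2]
  set s := Real.sqrt (1 - 16 * Real.sqrt 2 * L * ρ) with hsdef
  have hs_nonneg : 0 ≤ s := Real.sqrt_nonneg _
  have hs_sq : s ^ 2 = 1 - 16 * Real.sqrt 2 * L * ρ := Real.sq_sqrt (by linarith)
  have hs_le1 : s ≤ 1 := Real.sqrt_le_one.mpr (by linarith)
  have hden_pos : 0 < 2 * Real.sqrt 2 * L := by positivity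
  have hη0 : 0 ≤ η := le_trans (div_nonneg (by linarith) hden_pos.le) hη₁
  rcases eq_or_lt_of_le hη0 with hη00 | hηpos
  · -- η = 0 : then ρ = 0, ψ = 1, iterates are constant
    have hηz : η = 0 := hη00.symm
    have h1s : 1 - s ≤ 0 := by
      by_contra hcon
      push_neg at hcon
      have hdp : 0 < (1 - s) / (2 * Real.sqrt 2 * L) := div_pos (by linarith) hden_pos
      linarith
    have hρ0 : ρ = 0 := by
      have hmm : 0 ≤ (s - 1) * (s + 1) :=
        mul_nonneg (by linarith) (by linarith)
      have hle : 16 * Real.sqrt 2 * L * ρ ≤ 0 := by linarith only [hmm, hs_sq]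
      have hρle : ρ ≤ 0 := by
        by_contra hcc
        push_neg at hcc
        have := mul_pos (mul_pos (by positivity : (0:ℝ) < 16 * Real.sqrt 2) hL0) hcc
        linarith only [this, hle]
      linarith
    have hψ1 : ψ = 1 := by rw [hψ, hρ0, hηz]; norm_num
    have hyx : ∀ k, y k = x k := by
      intro k; rw [hy k, hηz, zero_smul, sub_zero]
    have hxx : ∀ k, x (k + 1) = x k := by
      intro k; rw [hx k, hηz, zero_smul, sub_zero]
    refine ⟨by rw [hψ1]; norm_num, ?_, ?_⟩
    · intro k
      rw [hxx k, hyx k]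
      simp
    · apply antitone_nat_of_succ_le
      intro k
      simp [hxx k]
  · -- η > 0
    have hc1 : 2 * Real.sqrt 2 * L * ((1 + s) / (2 * Real.sqrt 2 * L)) = 1 + s := by
      field_simp
    have hc2 : 2 * Real.sqrt 2 * L * ((1 - s) / (2 * Real.sqrt 2 * L)) = 1 - s := by
      field_simp
    have hη2u : 2 * Real.sqrt 2 * L * η ≤ 1 + s := by
      have h := mul_le_mul_of_nonneg_left hη₂ hden_pos.le
      rw [hc1] at h; exact h
    have hη2l : 1 - s ≤ 2 * Real.sqrt 2 * L * η := by
      have h := mul_le_mul_of_nonneg_left hη₁ hden_pos.le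
      rw [hc2] at h; exact h
    have hquad : 8 * L ^ 2 * η ^ 2 - 4 * Real.sqrt 2 * L * η + 16 * Real.sqrt 2 * L * ρ ≤ 0 := by
      have h := sq_le_sq' (by linarith : -s ≤ 2 * Real.sqrt 2 * L * η - 1) (by linarith)
      rw [hs_sq] at h
      have heq : (2 * Real.sqrt 2 * L * η - 1) ^ 2 =
          8 * L ^ 2 * η ^ 2 - 4 * Real.sqrt 2 * L * η + 1 := by
        linear_combination (4 * L ^ 2 * η ^ 2) * sqrt2_sq
      linarith only [h, heq]
    have hq : Real.sqrt 2 * L * η ^ 2 - η + 4 * ρ ≤ 0 := by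
      have hc : (0:ℝ) < 4 * Real.sqrt 2 * L := by positivity
      have heq : 4 * Real.sqrt 2 * L * (Real.sqrt 2 * L * η ^ 2 - η + 4 * ρ) =
          8 * L ^ 2 * η ^ 2 - 4 * Real.sqrt 2 * L * η + 16 * Real.sqrt 2 * L * ρ := by
        linear_combination (4 * L ^ 2 * η ^ 2) * sqrt2_sq
      have h' : 4 * Real.sqrt 2 * L * (Real.sqrt 2 * L * η ^ 2 - η + 4 * ρ) ≤
          4 * Real.sqrt 2 * L * 0 := by rw [heq, mul_zero]; exact hquad
      exact le_of_mul_le_mul_left h' hc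
    have hψη : ψ * η = η - 4 * ρ - (η + 4 * ρ) * (L ^ 2 * η ^ 2) := by
      have hηne : η ≠ 0 := ne_of_gt hηpos
      rw [hψ]
      field_simp
    have h5 : 0 ≤ Real.sqrt 2 - 2 * L * η + Real.sqrt 2 * L ^ 2 * η ^ 2 := by
      have h6 : Real.sqrt 2 * (Real.sqrt 2 - 2 * L * η + Real.sqrt 2 * L ^ 2 * η ^ 2) =
          (Real.sqrt 2 * L * η - 1) ^ 2 + 1 := by
        linear_combination sqrt2_sq
      have h7 : Real.sqrt 2 * 0 ≤
          Real.sqrt 2 * (Real.sqrt 2 - 2 * L * η + Real.sqrt 2 * L ^ 2 * η ^ 2) := by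
        rw [mul_zero, h6]; positivity
      exact le_of_mul_le_mul_left h7 sqrt2_pos
    have hA : 0 ≤ η - Real.sqrt 2 * L * η ^ 2 - 4 * ρ := by linarith
    have hring : (η - Real.sqrt 2 * L * η ^ 2 - 4 * ρ) * (1 + L ^ 2 * η ^ 2) +
        (L * η ^ 2) * (Real.sqrt 2 - 2 * L * η + Real.sqrt 2 * L ^ 2 * η ^ 2) =
        η - 4 * ρ - (η + 4 * ρ) * (L ^ 2 * η ^ 2) := by ring
    have hT1 : (0:ℝ) ≤ 1 + L ^ 2 * η ^ 2 := by positivity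
    have hT2 : (0:ℝ) ≤ L * η ^ 2 := by positivity
    have hψηnn : 0 ≤ ψ * η := by
      linarith only [mul_nonneg hA hT1, mul_nonneg hT2 h5, hψη, hring]
    have hψ0 : 0 ≤ ψ := le_of_mul_le_mul_right (by rwa [zero_mul]) hηpos
    -- key per-step inequality
    have hkey : ∀ k : ℕ, ‖F (x (k + 1))‖ ^ 2 ≤ ‖F (x k)‖ ^ 2 - ψ * ‖F (x k) - F (y k)‖ ^ 2 := by
      intro k
      have hxy : x (k + 1) - y k = η • F (x k) - η • F (y k) := by
        rw [hx k, hy k]; abel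
      have hxxk : x (k + 1) - x k = -(η • F (y k)) := by
        rw [hx k]; abel
      have hlip : ‖F (x (k + 1)) - F (y k)‖ ≤ L * (η * ‖F (x k) - F (y k)‖) := by
        have h := hL (x (k + 1)) (y k)
        rw [hxy, ← smul_sub, norm_smul, Real.norm_eq_abs, abs_of_pos hηpos, ← mul_assoc] at h
        rw [mul_assoc] at h
        exact h
      have hlipsq : ‖F (x (k + 1)) - F (y k)‖ ^ 2 ≤
          L ^ 2 * η ^ 2 * ‖F (x k) - F (y k)‖ ^ 2 := by
        have h := mul_self_le_mul_self (norm_nonneg (F (x (k + 1)) - F (y k))) hlip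
        calc ‖F (x (k + 1)) - F (y k)‖ ^ 2
            = ‖F (x (k + 1)) - F (y k)‖ * ‖F (x (k + 1)) - F (y k)‖ := by ring
          _ ≤ (L * (η * ‖F (x k) - F (y k)‖)) * (L * (η * ‖F (x k) - F (y k)‖)) := h
          _ = L ^ 2 * η ^ 2 * ‖F (x k) - F (y k)‖ ^ 2 := by ring
      have h1 : η * ⟪F (y k), F (x (k + 1)) - F (x k)⟫ ≤
          ρ * ‖F (x (k + 1)) - F (x k)‖ ^ 2 := by
        have h := hch (x (k + 1)) (x k)
        rw [hxxk] at h
        have hinner : ⟪F (x (k + 1)) - F (x k), -(η • F (y k))⟫ =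
            -(η * ⟪F (y k), F (x (k + 1)) - F (x k)⟫) := by
          rw [inner_neg_right, real_inner_smul_right, real_inner_comm]
        rw [hinner] at h
        linarith
      have hid : ‖F (x (k + 1))‖ ^ 2 = ‖F (x k)‖ ^ 2 - ‖F (x k) - F (y k)‖ ^ 2 +
          ‖F (x (k + 1)) - F (y k)‖ ^ 2 + 2 * ⟪F (y k), F (x (k + 1)) - F (x k)⟫ := by
        have e1 : ‖F (x k) - F (y k)‖ ^ 2 =
            ‖F (x k)‖ ^ 2 - 2 * ⟪F (x k), F (y k)⟫ + ‖F (y k)‖ ^ 2 :=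
          norm_sub_sq_real (F (x k)) (F (y k))
        have e2 : ‖F (x (k + 1)) - F (y k)‖ ^ 2 =
            ‖F (x (k + 1))‖ ^ 2 - 2 * ⟪F (x (k + 1)), F (y k)⟫ + ‖F (y k)‖ ^ 2 :=
          norm_sub_sq_real (F (x (k + 1))) (F (y k))
        have e3 : ⟪F (y k), F (x (k + 1)) - F (x k)⟫ =
            ⟪F (y k), F (x (k + 1))⟫ - ⟪F (y k), F (x k)⟫ :=
          inner_sub_right (F (y k)) (F (x (k + 1))) (F (x k))
        have e4 : ⟪F (y k), F (x (k + 1))⟫ = ⟪F (x (k + 1)), F (y k)⟫ :=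
          real_inner_comm (F (x (k + 1))) (F (y k))
        have e5 : ⟪F (y k), F (x k)⟫ = ⟪F (x k), F (y k)⟫ :=
          real_inner_comm (F (x k)) (F (y k))
        rw [e1, e2, e3, e4, e5]; ring
      have htri : ‖F (x (k + 1)) - F (x k)‖ ^ 2 ≤ 2 * ‖F (x k) - F (y k)‖ ^ 2 +
          2 * ‖F (x (k + 1)) - F (y k)‖ ^ 2 := by
        have h : ‖F (x (k + 1)) - F (x k)‖ ≤
            ‖F (x (k + 1)) - F (y k)‖ + ‖F (y k) - F (x k)‖ :=
          norm_sub_le_norm_sub_add_norm_sub (F (x (k + 1))) (F (y k)) (F (x k))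
        rw [norm_sub_rev (F (y k)) (F (x k))] at h
        have h' := mul_self_le_mul_self (norm_nonneg (F (x (k + 1)) - F (x k))) h
        have hsq := sq_nonneg (‖F (x (k + 1)) - F (y k)‖ - ‖F (x k) - F (y k)‖)
        nlinarith [h', hsq]
      have hid' : η * ‖F (x (k + 1))‖ ^ 2 = η * ‖F (x k)‖ ^ 2 -
          η * ‖F (x k) - F (y k)‖ ^ 2 + η * ‖F (x (k + 1)) - F (y k)‖ ^ 2 +
          2 * (η * ⟪F (y k), F (x (k + 1)) - F (x k)⟫) := by
        rw [hid]; ring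
      have h2 : ρ * ‖F (x (k + 1)) - F (x k)‖ ^ 2 ≤
          ρ * (2 * ‖F (x k) - F (y k)‖ ^ 2 + 2 * ‖F (x (k + 1)) - F (y k)‖ ^ 2) :=
        mul_le_mul_of_nonneg_left htri hρ
      have h3 : (η + 4 * ρ) * ‖F (x (k + 1)) - F (y k)‖ ^ 2 ≤
          (η + 4 * ρ) * (L ^ 2 * η ^ 2 * ‖F (x k) - F (y k)‖ ^ 2) :=
        mul_le_mul_of_nonneg_left hlipsq (by linarith)
      have hmain : η * ‖F (x (k + 1))‖ ^ 2 ≤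
          η * (‖F (x k)‖ ^ 2 - ψ * ‖F (x k) - F (y k)‖ ^ 2) := by
        have hexp : η * (‖F (x k)‖ ^ 2 - ψ * ‖F (x k) - F (y k)‖ ^ 2) =
            η * ‖F (x k)‖ ^ 2 - (ψ * η) * ‖F (x k) - F (y k)‖ ^ 2 := by ring
        rw [hexp]
        linarith only [hid', h1, h2, h3,
          mul_le_mul_of_nonneg_right hψη.le (sq_nonneg ‖F (x k) - F (y k)‖),
          mul_le_mul_of_nonneg_right hψη.ge (sq_nonneg ‖F (x k) - F (y k)‖)]
      exact le_of_mul_le_mul_left hmain hηpos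
    refine ⟨hψ0, hkey, ?_⟩
    apply antitone_nat_of_succ_le
    intro k
    have hk := hkey k
    have hsq : ‖F (x (k + 1))‖ ^ 2 ≤ ‖F (x k)‖ ^ 2 := by
      have := mul_nonneg hψ0 (sq_nonneg ‖F (x k) - F (y k)‖)
      linarith only [hk, this]
    have h' := Real.sqrt_le_sqrt hsq
    rwa [Real.sqrt_sq (norm_nonneg _), Real.sqrt_sq (norm_nonneg _)] at h'
end

section
/- Let T : ℝ^p ⇉ ℝ^p be a 3-cyclically monotone set-valued operator (i.e. ⟨u¹, x¹-x²⟩ + ⟨u², x²-x³⟩ + ⟨u³, x³-x¹⟩ ≥ 0 for all (xⁱ,uⁱ) ∈ graph T). Let F : ℝ^p → ℝ^p, let x* satisfy Fx* + ξ* = 0 with ξ* ∈ Tx*, and let β ∈ (0,1], η, γ > 0. Suppose y^k, x^{k+1}, ζ^k ∈ Ty^k, ξ^{k+1} ∈ Tx^{k+1} satisfy y^k = x^k - (η/β)(u^k + ζ^k) and x^{k+1} = x^k - η(Fy^k + ξ^{k+1}). Then ‖x^{k+1} - x*‖² ≤ ‖x^k - x*‖² - (1-β)‖x^{k+1} - x^k‖²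 - β‖x^k - y^k‖² - (β - γ)‖x^{k+1} - y^k‖² + (η²/γ)‖Fy^k - u^k‖² - 2η⟨Fy^k - Fx*, y^k - x*⟩. -/
open scoped RealInnerProductSpace

set_option maxHeartbeats 1000000

theorem geg2_key_estimate {p : ℕ}
    (F : EuclideanSpace ℝ (Fin p) → EuclideanSpace ℝ (Fin p))
    (T : EuclideanSpace ℝ (Fin p) → Set (EuclideanSpace ℝ (Fin p)))
    (hT3 : ∀ x₁ u₁ x₂ u₂ x₃ u₃, u₁ ∈ T x₁ → u₂ ∈ T x₂ → u₃ ∈ T x₃ →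
      0 ≤ ⟪u₁, x₁ - x₂⟫ + ⟪u₂, x₂ - x₃⟫ + ⟪u₃, x₃ - x₁⟫)
    (xs ξs : EuclideanSpace ℝ (Fin p)) (hξs : ξs ∈ T xs) (hzero : F xs + ξs = 0)
    (η β γ : ℝ) (hη : 0 < η) (hβ0 : 0 < β) (hβ1 : β ≤ 1) (hγ : 0 < γ)
    (x y u ζ ξ : ℕ → EuclideanSpace ℝ (Fin p))
    (hζ : ∀ k, ζ k ∈ T (y k))
    (hξ : ∀ k, ξ (k + 1) ∈ T (x (k + 1)))
    (hy : ∀ k, y k = x k - (η / β) • (u k + ζ k))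
    (hx : ∀ k, x (k + 1) = x k - η • (F (y k) + ξ (k + 1))) :
    ∀ k : ℕ,
      ‖x (k + 1) - xs‖ ^ 2 ≤
        ‖x k - xs‖ ^ 2 - (1 - β) * ‖x (k + 1) - x k‖ ^ 2
          - β * ‖x k - y k‖ ^ 2
          - (β - γ) * ‖x (k + 1) - y k‖ ^ 2
          + (η ^ 2 / γ) * ‖F (y k) - u k‖ ^ 2
          - 2 * η * ⟪F (y k) - F xs, y k - xs⟫ := by
  intro k
  have hηne : η ≠ 0 := ne_of_gt hη
  have hβne : β ≠ 0 := ne_of_gt hβ0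
  -- express ζ k, ξ (k+1), ξs in terms of the iterates
  have e0 : x k - y k = (η / β) • (u k + ζ k) := by rw [hy k]; abel
  have e1 : ζ k = (β / η) • (x k - y k) - u k := by
    rw [e0, smul_smul]
    have h1 : β / η * (η / β) = 1 := by field_simp
    rw [h1, one_smul]; abel
  have e2' : x k - x (k + 1) = η • (F (y k) + ξ (k + 1)) := by rw [hx k]; abel
  have e2 : ξ (k + 1) = (1 / η) • (x k - x (k + 1)) - F (y k) := by
    rw [e2', smul_smul, one_div_mul_cancel hηne, one_smul]; abel
  have e3 : ξs = -F xs := by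
    have h := hzero; rw [add_comm] at h; exact eq_neg_of_add_eq_zero_left h
  -- cyclic monotonicity applied to (y k, ζ k), (x (k+1), ξ (k+1)), (xs, ξs)
  have hc := hT3 (y k) (ζ k) (x (k + 1)) (ξ (k + 1)) xs ξs (hζ k) (hξ k) hξs
  have f1 : ⟪ζ k, y k - x (k + 1)⟫
      = β / η * ⟪x k - y k, y k - x (k + 1)⟫ - ⟪u k, y k - x (k + 1)⟫ := by
    rw [e1, inner_sub_left, real_inner_smul_left]
  have f2 : ⟪ξ (k + 1), x (k + 1) - xs⟫
      = 1 / η * ⟪x k - x (k + 1), x (k + 1) - xs⟫ - ⟪F (y k), x (k + 1) - xs⟫ := by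
    rw [e2, inner_sub_left, real_inner_smul_left]
  have f3 : ⟪ξs, xs - y k⟫ = -⟪F xs, xs - y k⟫ := by rw [e3, inner_neg_left]
  rw [f1, f2, f3] at hc
  -- scale the cyclic inequality by 2η, clearing divisions
  have hc2 : 0 ≤ 2 * β * ⟪x k - y k, y k - x (k + 1)⟫
      - 2 * η * ⟪u k, y k - x (k + 1)⟫
      + 2 * ⟪x k - x (k + 1), x (k + 1) - xs⟫
      - 2 * η * ⟪F (y k), x (k + 1) - xs⟫
      - 2 * η * ⟪F xs, xs - y k⟫ := by
    have h := mul_nonneg (by linarith : (0:ℝ) ≤ 2 * η) hc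
    have heq : 2 * η * (β / η * ⟪x k - y k, y k - x (k + 1)⟫ - ⟪u k, y k - x (k + 1)⟫
        + (1 / η * ⟪x k - x (k + 1), x (k + 1) - xs⟫ - ⟪F (y k), x (k + 1) - xs⟫)
        + -⟪F xs, xs - y k⟫)
        = 2 * β * ⟪x k - y k, y k - x (k + 1)⟫
          - 2 * η * ⟪u k, y k - x (k + 1)⟫
          + 2 * ⟪x k - x (k + 1), x (k + 1) - xs⟫
          - 2 * η * ⟪F (y k), x (k + 1) - xs⟫
          - 2 * η * ⟪F xs, xs - y k⟫ := by
      field_simp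
      ring
    rw [heq] at h
    exact h
  -- norm identities
  have n1 : ‖x k - xs‖ ^ 2
      = ‖x k - x (k + 1)‖ ^ 2 + 2 * ⟪x k - x (k + 1), x (k + 1) - xs⟫ + ‖x (k + 1) - xs‖ ^ 2 := by
    have h := norm_add_sq_real (x k - x (k + 1)) (x (k + 1) - xs)
    have h2 : x k - x (k + 1) + (x (k + 1) - xs) = x k - xs := by abel
    rw [h2] at h; linarith
  have n2 : β * ‖x k - x (k + 1)‖ ^ 2
      = β * ‖x k - y k‖ ^ 2 + 2 * β * ⟪x k - y k, y k - x (k + 1)⟫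
        + β * ‖y k - x (k + 1)‖ ^ 2 := by
    have h := norm_add_sq_real (x k - y k) (y k - x (k + 1))
    have h2 : x k - y k + (y k - x (k + 1)) = x k - x (k + 1) := by abel
    rw [h2] at h; linear_combination β * h
  have n3 : ‖x (k + 1) - x k‖ ^ 2 = ‖x k - x (k + 1)‖ ^ 2 := by rw [norm_sub_rev]
  have n3b : β * ‖x (k + 1) - x k‖ ^ 2 = β * ‖x k - x (k + 1)‖ ^ 2 := by rw [n3]
  have n4 : ‖x (k + 1) - y k‖ ^ 2 = ‖y k - x (k + 1)‖ ^ 2 := by rw [norm_sub_rev]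
  have n4b : β * ‖x (k + 1) - y k‖ ^ 2 = β * ‖y k - x (k + 1)‖ ^ 2 := by rw [n4]
  -- Young's inequality
  have yng : 2 * η * ⟪u k - F (y k), x (k + 1) - y k⟫
      ≤ (η ^ 2 / γ) * ‖F (y k) - u k‖ ^ 2 + γ * ‖x (k + 1) - y k‖ ^ 2 := by
    have h0 : (0:ℝ) ≤ ‖η • (u k - F (y k)) - γ • (x (k + 1) - y k)‖ ^ 2 := sq_nonneg _
    rw [norm_sub_sq_real, norm_smul, norm_smul, real_inner_smul_left,
      real_inner_smul_right] at h0
    have hnn : ‖u k - F (y k)‖ = ‖F (y k) - u k‖ := norm_sub_rev _ _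
    rw [hnn] at h0
    simp only [Real.norm_eq_abs, abs_of_pos hη, abs_of_pos hγ, mul_pow] at h0
    rw [← sub_nonneg]
    have key : ((η ^ 2 / γ) * ‖F (y k) - u k‖ ^ 2 + γ * ‖x (k + 1) - y k‖ ^ 2
        - 2 * η * ⟪u k - F (y k), x (k + 1) - y k⟫) * γ
        = η ^ 2 * ‖F (y k) - u k‖ ^ 2 - 2 * (η * γ * ⟪u k - F (y k), x (k + 1) - y k⟫)
          + γ ^ 2 * ‖x (k + 1) - y k‖ ^ 2 := by
      field_simp; ring
    nlinarith [h0, key, hγ]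
  -- inner product decompositions, scaled by 2η
  have d1 : 2 * η * ⟪F (y k), x (k + 1) - xs⟫
      = 2 * η * ⟪F (y k), x (k + 1) - y k⟫ + 2 * η * ⟪F (y k), y k - xs⟫ := by
    have h : ⟪F (y k), x (k + 1) - xs⟫
        = ⟪F (y k), (x (k + 1) - y k) + (y k - xs)⟫ := by congr 1; abel
    rw [inner_add_right] at h; linear_combination 2 * η * h
  have d2 : 2 * η * ⟪u k, y k - x (k + 1)⟫ = -(2 * η * ⟪u k, x (k + 1) - y k⟫) := by
    have h : ⟪u k, y k - x (k + 1)⟫ = ⟪u k, -(x (k + 1) - y k)⟫ := by congr 1; abel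
    rw [inner_neg_right] at h; linear_combination 2 * η * h
  have d3 : 2 * η * ⟪F xs, xs - y k⟫ = -(2 * η * ⟪F xs, y k - xs⟫) := by
    have h : ⟪F xs, xs - y k⟫ = ⟪F xs, -(y k - xs)⟫ := by congr 1; abel
    rw [inner_neg_right] at h; linear_combination 2 * η * h
  have d4 : 2 * η * ⟪F (y k) - F xs, y k - xs⟫
      = 2 * η * ⟪F (y k), y k - xs⟫ - 2 * η * ⟪F xs, y k - xs⟫ := by
    have h := inner_sub_left (𝕜 := ℝ) (F (y k)) (F xs) (y k - xs)
    linear_combination 2 * η * h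
  have d5 : 2 * η * ⟪u k - F (y k), x (k + 1) - y k⟫
      = 2 * η * ⟪u k, x (k + 1) - y k⟫ - 2 * η * ⟪F (y k), x (k + 1) - y k⟫ := by
    have h := inner_sub_left (𝕜 := ℝ) (u k) (F (y k)) (x (k + 1) - y k)
    linear_combination 2 * η * h
  linarith [hc2, n1, n2, n3, n3b, n4, n4b, yng, d1, d2, d3, d4, d5]
end

section
/- Let F : ℝ^p → ℝ^p be monotone and L-Lipschitz continuous and T : ℝ^p ⇉ ℝ^p be 3-cyclically monotone. Suppose, for β = 1 and η > 0, that points x^k, y^k, x^{k+1} and elements ξ^k ∈ Tx^k, ζ^k ∈ Ty^k, ξ^{k+1} ∈ Tx^{k+1} satisfy y^k = x^k - η(u^k + ζ^k) and x^{k+1} = x^k - η(Fy^k + ξ^{k+1}). Define w^k := Fx^k + ξ^k, w̃^k := Fx^k + ζ^k, ŵ^{k+1} := Fy^k + ξ^{k+1}. Then for any ω ≥ 0, γ > 0, s > 0: ‖w^{k+1}‖² + ω‖w^{k+1} - ŵ^{k+1}‖² ≤ ‖w^k‖² - (1-γ)‖w^k - w̃^k‖² + [1/γ + (1+ω)(1+s)L²η²/s]‖Fx^k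 - u^k‖² - [1 - (1+ω)(1+s)L²η²]‖ŵ^{k+1} - w̃^k‖². -/
open scoped RealInnerProductSpace

set_option maxHeartbeats 2000000 in
theorem geg2_monotone_estimate {p : ℕ}
    (F : EuclideanSpace ℝ (Fin p) → EuclideanSpace ℝ (Fin p))
    (hmono : ∀ a b, 0 ≤ ⟪F a - F b, a - b⟫)
    (L : ℝ) (hL : ∀ a b, ‖F a - F b‖ ≤ L * ‖a - b‖)
    (T : EuclideanSpace ℝ (Fin p) → Set (EuclideanSpace ℝ (Fin p)))
    (hT3 : ∀ x₁ u₁ x₂ u₂ x₃ u₃, u₁ ∈ T x₁ → u₂ ∈ T x₂ → u₃ ∈ T x₃ →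
      0 ≤ ⟪u₁, x₁ - x₂⟫ + ⟪u₂, x₂ - x₃⟫ + ⟪u₃, x₃ - x₁⟫)
    (η : ℝ) (hη : 0 < η)
    (x y u ζ ξ : ℕ → EuclideanSpace ℝ (Fin p))
    (hζ : ∀ k, ζ k ∈ T (y k))
    (hξ : ∀ k, ξ k ∈ T (x k))
    (hy : ∀ k, y k = x k - η • (u k + ζ k))
    (hx : ∀ k, x (k + 1) = x k - η • (F (y k) + ξ (k + 1))) :
    ∀ k : ℕ, ∀ ω : ℝ, 0 ≤ ω → ∀ γ : ℝ, 0 < γ → ∀ s : ℝ, 0 < s →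
      ‖F (x (k + 1)) + ξ (k + 1)‖ ^ 2
          + ω * ‖(F (x (k + 1)) + ξ (k + 1)) - (F (y k) + ξ (k + 1))‖ ^ 2 ≤
        ‖F (x k) + ξ k‖ ^ 2
          - (1 - γ) * ‖(F (x k) + ξ k) - (F (x k) + ζ k)‖ ^ 2
          + (1 / γ + (1 + ω) * (1 + s) * L ^ 2 * η ^ 2 / s) * ‖F (x k) - u k‖ ^ 2
          - (1 - (1 + ω) * (1 + s) * L ^ 2 * η ^ 2) *
              ‖(F (y k) + ξ (k + 1)) - (F (x k) + ζ k)‖ ^ 2 := by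
  intro k ω hω γ hγ s hs
  set a := F (x k) + ξ k with ha
  set b := F (x k) + ζ k with hb
  set c := F (y k) + ξ (k + 1) with hc
  set d := F (x (k + 1)) + ξ (k + 1) with hd
  set e := F (x k) - u k with he
  -- step identities
  have hxx : x (k + 1) - x k = (-η) • c := by
    rw [hx k, hc]; module
  have hxy : x k - y k = η • (b - e) := by
    rw [hy k, hb, he]; module
  have hyx : y k - x (k + 1) = η • (c - b + e) := by
    rw [hy k, hx k, hb, hc, he]; module
  have hab : a - b = ξ k - ζ k := by rw [ha, hb]; abel
  -- monotonicity of F between x^{k+1} and x^k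
  have hth : ⟪F (x (k + 1)) - F (x k), c⟫ ≤ 0 := by
    have hm1 := hmono (x (k + 1)) (x k)
    rw [hxx, real_inner_smul_right] at hm1
    nlinarith [hm1, hη]
  -- 3-cyclic monotonicity
  have h3c := hT3 (x (k + 1)) (ξ (k + 1)) (x k) (ξ k) (y k) (ζ k)
    (hξ (k + 1)) (hξ k) (hζ k)
  rw [hxx, hxy, hyx, real_inner_smul_right, real_inner_smul_right,
    real_inner_smul_right] at h3c
  have h3c' : ⟪ξ (k + 1), c⟫ ≤ ⟪ξ k, b - e⟫ + ⟪ζ k, c - b + e⟫ := by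
    nlinarith [h3c, hη]
  -- T1 : key inner-product bound
  have T1 : ⟪d, c⟫ ≤ ⟪b, c⟫ + ⟪a - b, b - e⟫ := by
    have ed : ⟪d, c⟫ = ⟪F (x (k + 1)) - F (x k), c⟫ + ⟪F (x k), c⟫
        + ⟪ξ (k + 1), c⟫ := by
      rw [hd, inner_add_left, inner_sub_left]; ring
    have eb : ⟪b, c⟫ = ⟪F (x k), c⟫ + ⟪ζ k, c⟫ := by
      rw [hb, inner_add_left]
    have eab : ⟪a - b, b - e⟫ = ⟪ξ k, b - e⟫ - ⟪ζ k, b - e⟫ := by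
      rw [hab, inner_sub_left]
    have ezc : ⟪ζ k, c - b + e⟫ = ⟪ζ k, c⟫ - ⟪ζ k, b - e⟫ := by
      rw [show c - b + e = c - (b - e) by abel, inner_sub_right]
    linarith [hth, h3c']
  -- T2 : Lipschitz bound
  have hdc : d - c = F (x (k + 1)) - F (y k) := by rw [hd, hc]; abel
  have hxy2 : x (k + 1) - y k = (-η) • (c - b + e) := by
    rw [hy k, hx k, hb, hc, he]; module
  have hnorm : ‖x (k + 1) - y k‖ = η * ‖c - b + e‖ := by
    rw [hxy2, norm_smul]
    simp [abs_of_pos hη]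
  have hL1 : ‖d - c‖ ≤ L * (η * ‖c - b + e‖) := by
    rw [hdc, ← hnorm]
    exact hL _ _
  have T2 : ‖d - c‖ ^ 2 ≤ L ^ 2 * η ^ 2 * ‖c - b + e‖ ^ 2 := by
    have := pow_le_pow_left₀ (norm_nonneg (d - c)) hL1 2
    calc ‖d - c‖ ^ 2 ≤ (L * (η * ‖c - b + e‖)) ^ 2 := this
      _ = L ^ 2 * η ^ 2 * ‖c - b + e‖ ^ 2 := by ring
  -- expanded version of T2
  have hcbe : ‖c - b + e‖ ^ 2 = ‖c - b‖ ^ 2 + 2 * ⟪c - b, e⟫ + ‖e‖ ^ 2 :=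
    norm_add_sq_real (c - b) e
  have T2' : ‖d - c‖ ^ 2 ≤ L ^ 2 * η ^ 2 * (‖c - b‖ ^ 2 + 2 * ⟪c - b, e⟫ + ‖e‖ ^ 2) := by
    rw [← hcbe]; exact T2
  have U2 : (1 + ω) * ‖d - c‖ ^ 2
      ≤ (1 + ω) * (L ^ 2 * η ^ 2 * (‖c - b‖ ^ 2 + 2 * ⟪c - b, e⟫ + ‖e‖ ^ 2)) :=
    mul_le_mul_of_nonneg_left T2' (by linarith)
  -- T3 : Young with s
  have T3 : 2 * ⟪c - b, e⟫ ≤ s * ‖c - b‖ ^ 2 + (1 / s) * ‖e‖ ^ 2 := by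
    have h0 : (0:ℝ) ≤ ‖s • (c - b) - e‖ ^ 2 := sq_nonneg _
    rw [norm_sub_sq_real, norm_smul, real_inner_smul_left] at h0
    rw [Real.norm_eq_abs, abs_of_pos hs] at h0
    have h1 : (0:ℝ) ≤ (1 / s) * ((s * ‖c - b‖) ^ 2 - 2 * (s * ⟪c - b, e⟫) + ‖e‖ ^ 2) :=
      mul_nonneg (by positivity) h0
    have h2 : (1 / s) * ((s * ‖c - b‖) ^ 2 - 2 * (s * ⟪c - b, e⟫) + ‖e‖ ^ 2)
        = s * ‖c - b‖ ^ 2 + (1 / s) * ‖e‖ ^ 2 - 2 * ⟪c - b, e⟫ := by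
      field_simp; ring
    linarith [h2 ▸ h1]
  have U3 : (1 + ω) * L ^ 2 * η ^ 2 * (2 * ⟪c - b, e⟫)
      ≤ (1 + ω) * L ^ 2 * η ^ 2 * (s * ‖c - b‖ ^ 2 + (1 / s) * ‖e‖ ^ 2) :=
    mul_le_mul_of_nonneg_left T3 (by positivity)
  -- T4 : Young with γ
  have T4 : 0 ≤ γ * ‖a - b‖ ^ 2 + (1 / γ) * ‖e‖ ^ 2 + 2 * ⟪a - b, e⟫ := by
    have h0 : (0:ℝ) ≤ ‖γ • (a - b) + e‖ ^ 2 := sq_nonneg _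
    rw [norm_add_sq_real, norm_smul, real_inner_smul_left] at h0
    rw [Real.norm_eq_abs, abs_of_pos hγ] at h0
    have h1 : (0:ℝ) ≤ (1 / γ) * ((γ * ‖a - b‖) ^ 2 + 2 * (γ * ⟪a - b, e⟫) + ‖e‖ ^ 2) :=
      mul_nonneg (by positivity) h0
    have h2 : (1 / γ) * ((γ * ‖a - b‖) ^ 2 + 2 * (γ * ⟪a - b, e⟫) + ‖e‖ ^ 2)
        = γ * ‖a - b‖ ^ 2 + (1 / γ) * ‖e‖ ^ 2 + 2 * ⟪a - b, e⟫ := by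
      field_simp; ring
    linarith [h2 ▸ h1]
  -- norm expansions
  have h_dc : ‖d - c‖ ^ 2 = ‖d‖ ^ 2 - 2 * ⟪d, c⟫ + ‖c‖ ^ 2 := norm_sub_sq_real d c
  have hE1 : ‖c - b‖ ^ 2 = ‖c‖ ^ 2 - 2 * ⟪b, c⟫ + ‖b‖ ^ 2 := by
    rw [norm_sub_sq_real, real_inner_comm]
  have hE2 : ‖a - b‖ ^ 2 = ‖a‖ ^ 2 - 2 * ⟪a, b⟫ + ‖b‖ ^ 2 := norm_sub_sq_real a b
  have hE3 : ⟪a - b, b - e⟫ = ⟪a, b⟫ - ⟪a, e⟫ - ‖b‖ ^ 2 + ⟪b, e⟫ := by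
    simp only [inner_sub_left, inner_sub_right, real_inner_self_eq_norm_sq]
    ring
  have hE4 : ⟪a - b, e⟫ = ⟪a, e⟫ - ⟪b, e⟫ := inner_sub_left a b e
  -- rewrite the fraction coefficient in the goal
  have hco : 1 / γ + (1 + ω) * (1 + s) * L ^ 2 * η ^ 2 / s
      = 1 / γ + (1 + ω) * L ^ 2 * η ^ 2 + (1 + ω) * L ^ 2 * η ^ 2 * (1 / s) := by
    field_simp; ring
  rw [hco]
  linarith [T1, U2, U3, T4, h_dc, hE1, hE2, hE3, hE4]
end

section
/- Let F : ℝ^p → ℝ^p be L-Lipschitz continuous, T maximally 3-cyclically monotone, and assume there exists x* with 0 ∈ Fx* + Tx* such that ⟨Fx - Fx*, x - x*⟩ ≥ 0 for all x. Let (x^k, y^k) be generated by the extragradient method y^k := J_{(η/β)T}(x^k - (η/β)Fx^k), x^{k+1} := J_{ηT}(x^k - η Fy^k), with 0 < η ≤ β/L and β ∈ (0,1]. Then with C₁ := β - Lη ≥ 0 and C₂ := 1 - β ≥ 0: Σ_{k=0}^K [C₁‖y^k - x^k‖² + C₁‖x^{k+1} - y^k‖² + C₂‖x^{k+1} - x^k‖²]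 ≤ ‖x⁰ - x*‖² for all K ≥ 0. -/
open scoped RealInnerProductSpace
open Finset

set_option maxHeartbeats 1000000 in
theorem eg2_summability_bound {p : ℕ}
    (F : EuclideanSpace ℝ (Fin p) → EuclideanSpace ℝ (Fin p))
    (L : ℝ) (hL0 : 0 < L) (hL : ∀ a b, ‖F a - F b‖ ≤ L * ‖a - b‖)
    (T : EuclideanSpace ℝ (Fin p) → Set (EuclideanSpace ℝ (Fin p)))
    (hT3 : ∀ x₁ u₁ x₂ u₂ x₃ u₃, u₁ ∈ T x₁ → u₂ ∈ T x₂ → u₃ ∈ T x₃ →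
      0 ≤ ⟪u₁, x₁ - x₂⟫ + ⟪u₂, x₂ - x₃⟫ + ⟪u₃, x₃ - x₁⟫)
    (xs ξs : EuclideanSpace ℝ (Fin p)) (hξs : ξs ∈ T xs) (hzero : F xs + ξs = 0)
    (hsm : ∀ z, 0 ≤ ⟪F z - F xs, z - xs⟫)
    (η β : ℝ) (hη0 : 0 < η) (hηβ : η ≤ β / L) (hβ0 : 0 < β) (hβ1 : β ≤ 1)
    (x y ζ ξ : ℕ → EuclideanSpace ℝ (Fin p))
    (hζ : ∀ k, ζ k ∈ T (y k))
    (hξ : ∀ k, ξ (k + 1) ∈ T (x (k + 1)))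
    (hy : ∀ k, y k = x k - (η / β) • (F (x k) + ζ k))
    (hx : ∀ k, x (k + 1) = x k - η • (F (y k) + ξ (k + 1))) :
    0 ≤ β - L * η ∧ 0 ≤ 1 - β ∧
      ∀ K : ℕ,
        ∑ k ∈ range (K + 1),
            ((β - L * η) * ‖y k - x k‖ ^ 2 + (β - L * η) * ‖x (k + 1) - y k‖ ^ 2
              + (1 - β) * ‖x (k + 1) - x k‖ ^ 2) ≤
          ‖x 0 - xs‖ ^ 2 := by
  have hLη : L * η ≤ β := by
    have := (le_div_iff₀ hL0).mp hηβ
    linarith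
  refine ⟨by linarith, by linarith, ?_⟩
  have hξs' : ξs = -F xs := eq_neg_of_add_eq_zero_right hzero
  -- per-step inequality
  have key : ∀ k : ℕ,
      (β - L * η) * ‖y k - x k‖ ^ 2 + (β - L * η) * ‖x (k + 1) - y k‖ ^ 2
        + (1 - β) * ‖x (k + 1) - x k‖ ^ 2 ≤ ‖x k - xs‖ ^ 2 - ‖x (k + 1) - xs‖ ^ 2 := by
    intro k
    set A := x k with hA
    set Y := y k with hY
    set B := x (k + 1) with hB
    -- resolvent relations
    have hFAZ : F A + ζ k = (β / η) • (A - Y) := by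
      have h1 : (η / β) • (F A + ζ k) = A - Y := by
        rw [hY, hA, hy k]; abel
      have h2 : (β / η) • ((η / β) • (F A + ζ k)) = (β / η) • (A - Y) := by rw [h1]
      have hone : (β / η) * (η / β) = 1 := by field_simp
      rwa [smul_smul, hone, one_smul] at h2
    have hFYΞ : F Y + ξ (k + 1) = η⁻¹ • (A - B) := by
      have h1 : η • (F Y + ξ (k + 1)) = A - B := by
        rw [hB, hA, hx k]; abel
      have h2 : η⁻¹ • (η • (F Y + ξ (k + 1))) = η⁻¹ • (A - B) := by rw [h1]
      rwa [smul_smul, inv_mul_cancel₀ hη0.ne', one_smul] at h2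
    -- 3-cyclic monotonicity
    have hM := hT3 Y (ζ k) B (ξ (k + 1)) xs ξs (hζ k) (hξ k) hξs
    have e1 : ⟪ζ k, Y - B⟫ = (β / η) * ⟪A - Y, Y - B⟫ - ⟪F A, Y - B⟫ := by
      have h1 : ⟪F A + ζ k, Y - B⟫ = (β / η) * ⟪A - Y, Y - B⟫ := by
        rw [hFAZ, real_inner_smul_left]
      have h2 : ⟪F A + ζ k, Y - B⟫ = ⟪F A, Y - B⟫ + ⟪ζ k, Y - B⟫ := inner_add_left _ _ _
      linarith
    have e2 : ⟪ξ (k + 1), B - xs⟫ = η⁻¹ * ⟪A - B, B - xs⟫ - ⟪F Y, B - xs⟫ := by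
      have h1 : ⟪F Y + ξ (k + 1), B - xs⟫ = η⁻¹ * ⟪A - B, B - xs⟫ := by
        rw [hFYΞ, real_inner_smul_left]
      have h2 : ⟪F Y + ξ (k + 1), B - xs⟫ = ⟪F Y, B - xs⟫ + ⟪ξ (k + 1), B - xs⟫ :=
        inner_add_left _ _ _
      linarith
    have e3 : ⟪ξs, xs - Y⟫ = ⟪F xs, Y - xs⟫ := by
      rw [hξs', inner_neg_left]
      have h1 : ⟪F xs, xs - Y⟫ + ⟪F xs, Y - xs⟫ = 0 := by
        rw [← inner_add_right]
        simp
      linarith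
    -- strong-ish monotonicity at Y
    have hS : ⟪F xs, Y - xs⟫ ≤ ⟪F Y, Y - xs⟫ := by
      have := hsm Y
      rw [inner_sub_left] at this
      linarith
    -- Lipschitz bound
    have hlip : ⟪F Y, Y - B⟫ - ⟪F A, Y - B⟫ ≤ L * ‖Y - A‖ * ‖Y - B‖ := by
      have h1 : ⟪F Y - F A, Y - B⟫ ≤ ‖F Y - F A‖ * ‖Y - B‖ := real_inner_le_norm _ _
      have h2 : ‖F Y - F A‖ ≤ L * ‖Y - A‖ := hL Y A
      have h3 : ⟪F Y - F A, Y - B⟫ = ⟪F Y, Y - B⟫ - ⟪F A, Y - B⟫ := inner_sub_left _ _ _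
      have h4 : ‖F Y - F A‖ * ‖Y - B‖ ≤ (L * ‖Y - A‖) * ‖Y - B‖ :=
        mul_le_mul_of_nonneg_right h2 (norm_nonneg _)
      rw [h3] at h1
      linarith [h1.trans h4]
    have e4 : ⟪F Y, Y - xs⟫ - ⟪F Y, B - xs⟫ = ⟪F Y, Y - B⟫ := by
      rw [← inner_sub_right]
      congr 1
      abel
    -- norm identities
    have I1 : 2 * ⟪A - Y, Y - B⟫ = ‖B - A‖ ^ 2 - ‖Y - A‖ ^ 2 - ‖Y - B‖ ^ 2 := by
      have h1 := norm_sub_sq_real (Y - A) (Y - B)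
      have h2 : Y - A - (Y - B) = B - A := by abel
      have h3 : ⟪A - Y, Y - B⟫ = -⟪Y - A, Y - B⟫ := by
        have h4 : A - Y = -(Y - A) := by abel
        rw [h4, inner_neg_left]
      rw [h2] at h1
      linarith
    have I2 : ‖B - xs‖ ^ 2 = ‖A - xs‖ ^ 2 + 2 * ⟪A - xs, B - A⟫ + ‖B - A‖ ^ 2 := by
      have h1 := norm_add_sq_real (A - xs) (B - A)
      have h2 : A - xs + (B - A) = B - xs := by abel
      rw [h2] at h1
      linarith
    have e7 : ⟪A - B, B - xs⟫ = -⟪A - xs, B - A⟫ - ‖B - A‖ ^ 2 := by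
      have hb : B - xs = (A - xs) + (B - A) := by abel
      have ha : A - B = -(B - A) := by abel
      rw [hb, ha, inner_neg_left, inner_add_right, real_inner_comm (B - A) (A - xs),
        real_inner_self_eq_norm_sq]
      ring
    -- combine
    have hM' : 0 ≤ (β / η) * ⟪A - Y, Y - B⟫ + η⁻¹ * ⟪A - B, B - xs⟫
        + (⟪F Y, Y - B⟫ - ⟪F A, Y - B⟫) := by
      rw [e1, e2, e3] at hM
      linarith [hM, hS, e4]
    have hmul : 0 ≤ η * ((β / η) * ⟪A - Y, Y - B⟫ + η⁻¹ * ⟪A - B, B - xs⟫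
        + (⟪F Y, Y - B⟫ - ⟪F A, Y - B⟫)) := mul_nonneg hη0.le hM'
    have hexp : η * ((β / η) * ⟪A - Y, Y - B⟫ + η⁻¹ * ⟪A - B, B - xs⟫
        + (⟪F Y, Y - B⟫ - ⟪F A, Y - B⟫))
        = β * ⟪A - Y, Y - B⟫ + ⟪A - B, B - xs⟫
          + η * (⟪F Y, Y - B⟫ - ⟪F A, Y - B⟫) := by
      field_simp
    rw [hexp] at hmul
    -- replace inner products using identities
    have eivw : ⟪A - Y, Y - B⟫ = (‖B - A‖ ^ 2 - ‖Y - A‖ ^ 2 - ‖Y - B‖ ^ 2) / 2 := by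
      linarith [I1]
    rw [eivw, e7] at hmul
    -- Lipschitz, scaled by η
    have hlipmul : η * (⟪F Y, Y - B⟫ - ⟪F A, Y - B⟫) ≤ η * (L * ‖Y - A‖ * ‖Y - B‖) :=
      mul_le_mul_of_nonneg_left hlip hη0.le
    have hsq : L * ‖Y - A‖ * ‖Y - B‖ ≤ L / 2 * (‖Y - A‖ ^ 2 + ‖Y - B‖ ^ 2) := by
      have hab : 2 * ‖Y - A‖ * ‖Y - B‖ ≤ ‖Y - A‖ ^ 2 + ‖Y - B‖ ^ 2 :=
        two_mul_le_add_sq _ _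
      have h5 : (L / 2) * (2 * ‖Y - A‖ * ‖Y - B‖) ≤ (L / 2) * (‖Y - A‖ ^ 2 + ‖Y - B‖ ^ 2) :=
        mul_le_mul_of_nonneg_left hab (by positivity)
      nlinarith [h5]
    have hsqη : η * (L * ‖Y - A‖ * ‖Y - B‖) ≤ η * (L / 2 * (‖Y - A‖ ^ 2 + ‖Y - B‖ ^ 2)) :=
      mul_le_mul_of_nonneg_left hsq hη0.le
    -- finish
    have n2 : ‖x (k + 1) - y k‖ = ‖Y - B‖ := norm_sub_rev B Y
    show (β - L * η) * ‖Y - A‖ ^ 2 + (β - L * η) * ‖x (k + 1) - y k‖ ^ 2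
        + (1 - β) * ‖B - A‖ ^ 2 ≤ ‖A - xs‖ ^ 2 - ‖B - xs‖ ^ 2
    rw [n2]
    nlinarith [hmul, hlipmul, hsqη, I2]
  -- telescoping
  intro K
  calc ∑ k ∈ range (K + 1),
        ((β - L * η) * ‖y k - x k‖ ^ 2 + (β - L * η) * ‖x (k + 1) - y k‖ ^ 2
          + (1 - β) * ‖x (k + 1) - x k‖ ^ 2)
      ≤ ∑ k ∈ range (K + 1), (‖x k - xs‖ ^ 2 - ‖x (k + 1) - xs‖ ^ 2) :=
        Finset.sum_le_sum fun k _ => key k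
    _ = ‖x 0 - xs‖ ^ 2 - ‖x (K + 1) - xs‖ ^ 2 :=
        Finset.sum_range_sub' (fun k => ‖x k - xs‖ ^ 2) (K + 1)
    _ ≤ ‖x 0 - xs‖ ^ 2 := by
        have : (0:ℝ) ≤ ‖x (K + 1) - xs‖ ^ 2 := sq_nonneg _
        linarith
end

section
/- Under the conditions of the generalized FBFS scheme (points x^k, y^k, x^{k+1} ∈ ℝ^p with y^k = x^k - (η/β)(u^k + ζ^k) for some ζ^k ∈ Ty^k and x^{k+1} = x^k - η(Fy^k + ζ^k), where β ∈ (0,1], η > 0), for any γ > 0 and any x* with 0 ∈ Fx* + Tx*, without assuming ⟨Fy^k + ζ^k, y^k - x*⟩ ≥ -ρ‖Fy^k + ζ^k‖², we have ‖x^{k+1} - x*‖² ≤ ‖x^k - x*‖² - β‖x^k - y^k‖² + (η²/γ)‖Fy^k - u^k‖² - (β - γ)‖x^{k+1} - y^k‖² - 2η⟨Fy^k + ζ^k, y^k - x*⟩ - (1-β)‖x^{k+1} - x^k‖². -/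
open scoped RealInnerProductSpace

lemma gfbfs_aux {E : Type*} [NormedAddCommGroup E] [InnerProductSpace ℝ E]
    (a b w : E) (η β γ : ℝ) (hβ0 : 0 < β) (hγ : 0 < γ) :
    ‖w - η • (a + b)‖ ^ 2 ≤
      ‖w‖ ^ 2 - β * ‖(η / β) • b‖ ^ 2 + (η ^ 2 / γ) * ‖a‖ ^ 2
        - (β - γ) * ‖(η / β) • b - η • (a + b)‖ ^ 2
        - 2 * η * ⟪a + b, w - (η / β) • b⟫
        - (1 - β) * ‖η • (a + b)‖ ^ 2 := by
  have hβ' : β ≠ 0 := ne_of_gt hβ0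
  have hγ' : γ ≠ 0 := ne_of_gt hγ
  have hkey : (0:ℝ) ≤ ‖(β * (1 - γ)) • a + (γ * (1 - β)) • b‖ ^ 2 := sq_nonneg _
  rw [← sub_nonneg]
  have hpos : (0:ℝ) < γ * β ^ 2 := by positivity
  have hEq : (γ * β ^ 2) *
      ((‖w‖ ^ 2 - β * ‖(η / β) • b‖ ^ 2 + (η ^ 2 / γ) * ‖a‖ ^ 2
        - (β - γ) * ‖(η / β) • b - η • (a + b)‖ ^ 2
        - 2 * η * ⟪a + b, w - (η / β) • b⟫
        - (1 - β) * ‖η • (a + b)‖ ^ 2) - ‖w - η • (a + b)‖ ^ 2)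
      = η ^ 2 * ‖(β * (1 - γ)) • a + (γ * (1 - β)) • b‖ ^ 2 := by
    simp only [← real_inner_self_eq_norm_sq, inner_sub_left, inner_sub_right,
      inner_add_left, inner_add_right, real_inner_smul_left, real_inner_smul_right,
      real_inner_comm w a, real_inner_comm w b, real_inner_comm b a]
    field_simp
    ring
  have h2 : (0:ℝ) ≤ (γ * β ^ 2) *
      ((‖w‖ ^ 2 - β * ‖(η / β) • b‖ ^ 2 + (η ^ 2 / γ) * ‖a‖ ^ 2
        - (β - γ) * ‖(η / β) • b - η • (a + b)‖ ^ 2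
        - 2 * η * ⟪a + b, w - (η / β) • b⟫
        - (1 - β) * ‖η • (a + b)‖ ^ 2) - ‖w - η • (a + b)‖ ^ 2) := by
    rw [hEq]; exact mul_nonneg (sq_nonneg _) hkey
  nlinarith [h2, hpos]

theorem gfbfs_key_estimate {p : ℕ}
    (F : EuclideanSpace ℝ (Fin p) → EuclideanSpace ℝ (Fin p))
    (T : EuclideanSpace ℝ (Fin p) → Set (EuclideanSpace ℝ (Fin p)))
    (η β : ℝ) (hη : 0 < η) (hβ0 : 0 < β) (hβ1 : β ≤ 1)
    (x y u ζ : ℕ → EuclideanSpace ℝ (Fin p))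
    (hζ : ∀ k, ζ k ∈ T (y k))
    (hy : ∀ k, y k = x k - (η / β) • (u k + ζ k))
    (hx : ∀ k, x (k + 1) = x k - η • (F (y k) + ζ k)) :
    ∀ γ : ℝ, 0 < γ →
      ∀ xs ξs : EuclideanSpace ℝ (Fin p), ξs ∈ T xs → F xs + ξs = 0 →
        ∀ k : ℕ,
          ‖x (k + 1) - xs‖ ^ 2 ≤
            ‖x k - xs‖ ^ 2 - β * ‖x k - y k‖ ^ 2
              + (η ^ 2 / γ) * ‖F (y k) - u k‖ ^ 2
              - (β - γ) * ‖x (k + 1) - y k‖ ^ 2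
              - 2 * η * ⟪F (y k) + ζ k, y k - xs⟫
              - (1 - β) * ‖x (k + 1) - x k‖ ^ 2 := by
  intro γ hγ xs ξs hξ hsum k
  set a := F (y k) - u k with ha
  set b := u k + ζ k with hb
  set w := x k - xs with hw
  have hab : F (y k) + ζ k = a + b := by rw [ha, hb]; abel
  have h1 : x (k + 1) - xs = w - η • (a + b) := by
    rw [hx k, hab, hw]; abel
  have h2 : x k - y k = (η / β) • b := by
    rw [hy k, hb]; abel
  have h3 : x (k + 1) - y k = (η / β) • b - η • (a + b) := by
    rw [hx k, hab, hy k, hb]; abel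
  have h4 : y k - xs = w - (η / β) • b := by
    rw [hy k, hw, hb]; abel
  have h5 : ‖x (k + 1) - x k‖ = ‖η • (a + b)‖ := by
    rw [hx k, hab]
    rw [show x k - η • (a + b) - x k = -(η • (a + b)) by abel, norm_neg]
  rw [h1, h2, h3, h4, h5, hab]
  exact gfbfs_aux a b w η β γ hβ0 hγ
end

section
/- Let Φ = F + T be maximally monotone with F : ℝ^p → ℝ^p L-Lipschitz continuous and T maximally monotone, and let (x^k) be generated by the RFBS scheme y^k := 2x^k - x^{k-1}, x^{k+1} := J_{ηT}(x^k - η Fy^k), with √2 Lη < 1. Define w^k := Fx^k + ξ^k and ŵ^k := Fy^{k-1} + ξ^k where ξ^k ∈ Tx^k is determined by the resolvent. Then with ω := 2L²η²/(1 - 2L²η²) > 0: ‖w^{k+1}‖² + ω‖Fx^{k+1} - Fy^k‖² ≤ ‖w^k‖² + ω‖Fx^k - Fy^{k-1}‖² - ((1 - 4L²η²)/(1 - 2L²η²))‖Fy^k - Fx^k + ξ^{k+1} - ξ^k‖². -/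
open scoped RealInnerProductSpace

set_option maxHeartbeats 1000000

theorem rfbs_residual_descent {p : ℕ}
    (F : EuclideanSpace ℝ (Fin p) → EuclideanSpace ℝ (Fin p))
    (L : ℝ) (hL0 : 0 ≤ L) (hL : ∀ a b, ‖F a - F b‖ ≤ L * ‖a - b‖)
    (T : EuclideanSpace ℝ (Fin p) → Set (EuclideanSpace ℝ (Fin p)))
    (hPhiMono : ∀ a b u v, u ∈ T a → v ∈ T b →
      0 ≤ ⟪(F a + u) - (F b + v), a - b⟫)
    (η : ℝ) (hη : 0 < η) (hstep : Real.sqrt 2 * L * η < 1)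
    (x y ξ : ℕ → EuclideanSpace ℝ (Fin p))
    (hy0 : y 0 = x 0)
    (hy : ∀ k, y (k + 1) = (2 : ℝ) • x (k + 1) - x k)
    (hξmem : ∀ k, ξ (k + 1) ∈ T (x (k + 1)))
    (hξ : ∀ k, ξ (k + 1) = (1 / η) • (x k - η • F (y k) - x (k + 1)))
    (ω : ℝ) (hω : ω = 2 * L ^ 2 * η ^ 2 / (1 - 2 * L ^ 2 * η ^ 2)) :
    ∀ k : ℕ,
      ‖F (x (k + 2)) + ξ (k + 2)‖ ^ 2 + ω * ‖F (x (k + 2)) - F (y (k + 1))‖ ^ 2 ≤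
        ‖F (x (k + 1)) + ξ (k + 1)‖ ^ 2 + ω * ‖F (x (k + 1)) - F (y k)‖ ^ 2
          - ((1 - 4 * L ^ 2 * η ^ 2) / (1 - 2 * L ^ 2 * η ^ 2)) *
              ‖F (y (k + 1)) - F (x (k + 1)) + ξ (k + 2) - ξ (k + 1)‖ ^ 2 := by
  intro k
  -- the key step relation: x j - x (j+1) = η • (F (y j) + ξ (j+1))
  have key : ∀ j, x j - x (j + 1) = η • (F (y j) + ξ (j + 1)) := by
    intro j
    rw [hξ j, smul_add, smul_smul, mul_one_div_cancel hη.ne', one_smul]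
    abel
  set a := F (y (k + 1)) + ξ (k + 2) with ha
  set b := F (x (k + 1)) + ξ (k + 1) with hb
  set e := F (x (k + 2)) - F (y (k + 1)) with he
  set e' := F (x (k + 1)) - F (y k) with he'
  have hae : F (x (k + 2)) + ξ (k + 2) = a + e := by rw [ha, he]; abel
  have hab : F (y (k + 1)) - F (x (k + 1)) + ξ (k + 2) - ξ (k + 1) = a - b := by
    rw [ha, hb]; abel
  -- step vectors
  have hstep2 : x (k + 1) - x (k + 2) = η • a := key (k + 1)
  have hstep1 : x k - x (k + 1) = η • (b - e') := by
    have := key k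
    rw [this]; congr 1; rw [hb, he']; abel
  -- x(k+2) - y(k+1) = η • ((b - e') - a)
  have hxy : x (k + 2) - y (k + 1) = η • ((b - e') - a) := by
    rw [hy k, smul_sub, ← hstep2, ← hstep1]
    simp only [two_smul]
    abel
  -- monotonicity gives ⟪a + e - b, a⟫ ≤ 0
  have hmono : ⟪a + e - b, a⟫ ≤ 0 := by
    have h0 := hPhiMono (x (k + 2)) (x (k + 1)) (ξ (k + 2)) (ξ (k + 1))
      (hξmem (k + 1)) (hξmem k)
    have hx21 : x (k + 2) - x (k + 1) = -(η • a) := by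
      rw [← hstep2]; abel
    rw [hae, ← hb, hx21, inner_neg_right, real_inner_smul_right] at h0
    nlinarith [h0]
  -- Lipschitz bound on e
  have hebound : ‖e‖ ≤ L * η * ‖a - b + e'‖ := by
    have h1 := hL (x (k + 2)) (y (k + 1))
    rw [← he, hxy, norm_smul, Real.norm_eq_abs, abs_of_pos hη] at h1
    have : ‖(b - e') - a‖ = ‖a - b + e'‖ := by
      rw [← norm_neg]; congr 1; abel
    rw [this] at h1; linarith [h1]
  -- P1 : ‖a+e‖² ≤ ‖b‖² - ‖a-b‖² + ‖e‖²
  have P1 : ‖a + e‖ ^ 2 ≤ ‖b‖ ^ 2 - ‖a - b‖ ^ 2 + ‖e‖ ^ 2 := by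
    have h1 : ‖a + e‖ ^ 2 = ‖a‖ ^ 2 + 2 * ⟪a, e⟫ + ‖e‖ ^ 2 := norm_add_sq_real a e
    have h2 : ‖a - b‖ ^ 2 = ‖a‖ ^ 2 - 2 * ⟪a, b⟫ + ‖b‖ ^ 2 := norm_sub_sq_real a b
    have h3 : ⟪a + e - b, a⟫ = ⟪a, a⟫ + ⟪e, a⟫ - ⟪b, a⟫ := by
      rw [inner_sub_left, inner_add_left]
    have h4 : ⟪a, a⟫ = ‖a‖ ^ 2 := real_inner_self_eq_norm_sq a
    have h5 : ⟪e, a⟫ = ⟪a, e⟫ := real_inner_comm a e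
    have h6 : ⟪b, a⟫ = ⟪a, b⟫ := real_inner_comm a b
    rw [h4, h5, h6] at h3
    linarith [hmono, h3.symm.le, h3.le]
  -- squared Lipschitz + Young
  have Pe : ‖e‖ ^ 2 ≤ 2 * L ^ 2 * η ^ 2 * (‖a - b‖ ^ 2 + ‖e'‖ ^ 2) := by
    have h1 : ‖e‖ ^ 2 ≤ (L * η * ‖a - b + e'‖) ^ 2 :=
      pow_le_pow_left₀ (norm_nonneg e) hebound 2
    have h1' : ‖e‖ ^ 2 ≤ (L * η) ^ 2 * ‖a - b + e'‖ ^ 2 := by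
      rw [← mul_pow]; exact h1
    have h2 : ‖a - b + e'‖ ^ 2 ≤ 2 * ‖a - b‖ ^ 2 + 2 * ‖e'‖ ^ 2 := by
      have hx := norm_add_sq_real (a - b) e'
      have hy' := real_inner_le_norm (a - b) e'
      nlinarith [sq_nonneg (‖a - b‖ - ‖e'‖)]
    have h3 := mul_le_mul_of_nonneg_left h2 (sq_nonneg (L * η))
    have h4 : (L * η) ^ 2 * (2 * ‖a - b‖ ^ 2 + 2 * ‖e'‖ ^ 2)
        = 2 * L ^ 2 * η ^ 2 * (‖a - b‖ ^ 2 + ‖e'‖ ^ 2) := by ring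
    linarith [h1', h3, h4.le, h4.ge]
  -- scalar setup
  have hs0 : 0 ≤ 2 * L ^ 2 * η ^ 2 := by positivity
  have hs1 : 2 * L ^ 2 * η ^ 2 < 1 := by
    have h2 : Real.sqrt 2 ^ 2 = 2 := Real.sq_sqrt (by norm_num)
    have hnn : 0 ≤ Real.sqrt 2 * L * η := by positivity
    nlinarith [hstep, h2, hnn]
  have hden : (0 : ℝ) < 1 - 2 * L ^ 2 * η ^ 2 := by linarith
  rw [hae, hab, ← sub_nonneg]
  have hexp : ((‖b‖ ^ 2 + ω * ‖e'‖ ^ 2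
        - (1 - 4 * L ^ 2 * η ^ 2) / (1 - 2 * L ^ 2 * η ^ 2) * ‖a - b‖ ^ 2)
        - (‖a + e‖ ^ 2 + ω * ‖e‖ ^ 2)) * (1 - 2 * L ^ 2 * η ^ 2)
      = (1 - 2 * L ^ 2 * η ^ 2) * (‖b‖ ^ 2 - ‖a + e‖ ^ 2)
        + 2 * L ^ 2 * η ^ 2 * (‖e'‖ ^ 2 - ‖e‖ ^ 2)
        - (1 - 4 * L ^ 2 * η ^ 2) * ‖a - b‖ ^ 2 := by
    rw [hω]; field_simp; ring
  have main : 0 ≤ ((‖b‖ ^ 2 + ω * ‖e'‖ ^ 2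
        - (1 - 4 * L ^ 2 * η ^ 2) / (1 - 2 * L ^ 2 * η ^ 2) * ‖a - b‖ ^ 2)
        - (‖a + e‖ ^ 2 + ω * ‖e‖ ^ 2)) * (1 - 2 * L ^ 2 * η ^ 2) := by
    rw [hexp]
    nlinarith [mul_le_mul_of_nonneg_left P1 hden.le, Pe]
  nlinarith [main, hden]
end

section
/- Let F : ℝ^p → ℝ^p be L-Lipschitz continuous, T maximally 3-cyclically monotone, and x* a zero of F + T. Let (x^k, y^k) be generated by the golden-ratio scheme: y^k := ((τ-1)/τ)x^k + (1/τ)y^{k-1}, x^{k+1} := J_{ηT}(y^k - η Fx^k), with τ > 1. Then for any γ > 0: τ‖y^{k+1} - x*‖² + (τ-1)(τ-γ)‖x^{k+1} - x^k‖² ≤ τ‖y^k - x*‖² + ((τ-1)L²η²/γ)‖x^k - x^{k-1}‖² - ((τ-1)(1-τ²+τ)/τ)‖x^{k+1} - y^k‖² - τ(τ-1)‖x^k - y^k‖² - 2η(τ-1)⟨Fx^k - Fx*, x^k - x*⟩. -/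
open scoped RealInnerProductSpace

/-!
Write `x⁺ = y - η (F x + ξ⁺)` with `ξ⁺ ∈ T x⁺` for a forward-backward step. Three-cyclic
monotonicity of `T`, applied to the two latest iterates and the solution `x*` (where
`-F x* ∈ T x*`), bounds `η ⟪F x - F x*, x - x*⟫` up to a Lipschitz error term by inner products
of the displacements `y - x⁺`. These inner products are turned into squared distances by the
three-point identity, the golden-ratio average `y⁺ = ((τ-1)/τ) x⁺ + (1/τ) y` converts
`‖x⁺ - x*‖²` into `‖y⁺ - x*‖²`, and Young's inequality with weight `γ` absorbs the Lipschitz error.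
-/

section InnerProductSpace

variable {E : Type*} [NormedAddCommGroup E] [InnerProductSpace ℝ E]

def IsThreeCyclicallyMonotone (T : E → Set E) : Prop :=
  ∀ x₁ u₁ x₂ u₂ x₃ u₃, u₁ ∈ T x₁ → u₂ ∈ T x₂ → u₃ ∈ T x₃ →
    0 ≤ ⟪u₁, x₁ - x₂⟫ + ⟪u₂, x₂ - x₃⟫ + ⟪u₃, x₃ - x₁⟫

theorem two_mul_inner_sub_sub (a b c : E) :
    2 * ⟪a - b, b - c⟫ = ‖a - c‖ ^ 2 - ‖a - b‖ ^ 2 - ‖b - c‖ ^ 2 := by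
  rw [← sub_add_sub_cancel a b c, norm_add_sq_real]
  ring

theorem norm_smul_add_smul_sub_sq {a b : ℝ} (hab : a + b = 1) (u v w : E) :
    ‖a • u + b • v - w‖ ^ 2 = a * ‖u - w‖ ^ 2 + b * ‖v - w‖ ^ 2 - a * b * ‖u - v‖ ^ 2 := by
  obtain rfl := eq_sub_of_add_eq hab
  rw [show (1 - b) • u + b • v - w = (1 - b) • (u - w) + b • (v - w) by module,
    ← sub_sub_sub_cancel_right u v w]
  generalize u - w = u', v - w = v'
  rw [norm_add_sq_real, norm_sub_sq_real, norm_smul, norm_smul, real_inner_smul_left,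
    real_inner_smul_right, mul_pow, mul_pow, Real.norm_eq_abs, Real.norm_eq_abs, sq_abs, sq_abs]
  ring

theorem two_mul_inner_le_of_norm_le {u v : E} {c γ : ℝ} (hγ : 0 < γ) (hu : ‖u‖ ≤ c) :
    2 * ⟪u, v⟫ ≤ c ^ 2 / γ + γ * ‖v‖ ^ 2 := by
  have hc : ‖u‖ ^ 2 ≤ c ^ 2 := pow_le_pow_left₀ (norm_nonneg u) hu 2
  rw [div_add' _ _ _ hγ.ne', le_div_iff₀ hγ]
  nlinarith [real_inner_le_norm u v, sq_nonneg (‖u‖ - γ * ‖v‖), norm_nonneg v]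

theorem two_mul_inner_sub_le_of_lipschitz {F : E → E} {L η γ : ℝ}
    (hF : ∀ a b, ‖F a - F b‖ ≤ L * ‖a - b‖) (hη : 0 ≤ η) (hγ : 0 < γ) (a b v : E) :
    2 * (η * ⟪F a - F b, v⟫) ≤ (η * L * ‖a - b‖) ^ 2 / γ + γ * ‖v‖ ^ 2 := by
  rw [← real_inner_smul_left]
  refine two_mul_inner_le_of_norm_le hγ ?_
  rw [norm_smul, Real.norm_of_nonneg hη, mul_assoc]
  exact mul_le_mul_of_nonneg_left (hF a b) hη

section GoldenRatioAverage

variable {τ : ℝ} {x' y y' : E}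

theorem sub_eq_smul_sub_of_eq_average (hτ : τ ≠ 0)
    (h : y' = ((τ - 1) / τ) • x' + (1 / τ) • y) : y - x' = τ • (y' - x') := by
  rw [smul_sub, h, smul_add, smul_smul, smul_smul, mul_div_cancel₀ _ hτ,
    mul_one_div_cancel hτ, one_smul]
  module

theorem mul_norm_sub_sq_of_eq_average (hτ : τ ≠ 0)
    (h : y' = ((τ - 1) / τ) • x' + (1 / τ) • y) (z : E) :
    τ * ‖y' - z‖ ^ 2 = (τ - 1) * ‖x' - z‖ ^ 2 + ‖y - z‖ ^ 2 - (τ - 1) / τ * ‖x' - y‖ ^ 2 := by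
  have hsum : (τ - 1) / τ + 1 / τ = 1 := by
    field_simp
    ring
  rw [h, norm_smul_add_smul_sub_sq hsum]
  field_simp

end GoldenRatioAverage

theorem IsThreeCyclicallyMonotone.inner_le_of_forwardBackward {T : E → Set E}
    (hT : IsThreeCyclicallyMonotone T) {F : E → E} {η : ℝ} (hη : 0 ≤ η)
    {x₀ x₁ x₂ y₀ y₁ ξ₁ ξ₂ xs ξs : E} (hξ₁ : ξ₁ ∈ T x₁) (hξ₂ : ξ₂ ∈ T x₂) (hξs : ξs ∈ T xs)
    (hzero : F xs + ξs = 0) (h₁ : x₁ = y₀ - η • (F x₀ + ξ₁)) (h₂ : x₂ = y₁ - η • (F x₁ + ξ₂)) :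
    η * ⟪F x₁ - F xs, x₁ - xs⟫ - η * ⟪F x₁ - F x₀, x₁ - x₂⟫ ≤
      ⟪y₁ - x₂, x₂ - xs⟫ + ⟪y₀ - x₁, x₁ - x₂⟫ := by
  have hcyc := mul_nonneg hη (hT x₂ ξ₂ xs ξs x₁ ξ₁ hξ₂ hξs hξ₁)
  have hy₀ : y₀ - x₁ = η • (F x₀ + ξ₁) := by rw [h₁, sub_sub_cancel]
  have hy₁ : y₁ - x₂ = η • (F x₁ + ξ₂) := by rw [h₂, sub_sub_cancel]
  rw [hy₀, hy₁]
  rw [eq_neg_of_add_eq_zero_right hzero] at hcyc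
  simp only [inner_add_left, inner_sub_left, inner_sub_right, real_inner_smul_left,
    inner_neg_left] at hcyc ⊢
  linarith

end InnerProductSpace

theorem golden_ratio_key_estimate_general {p : ℕ}
    (F : EuclideanSpace ℝ (Fin p) → EuclideanSpace ℝ (Fin p))
    (L : ℝ) (hL : ∀ a b, ‖F a - F b‖ ≤ L * ‖a - b‖)
    (T : EuclideanSpace ℝ (Fin p) → Set (EuclideanSpace ℝ (Fin p)))
    (hT3 : ∀ x₁ u₁ x₂ u₂ x₃ u₃, u₁ ∈ T x₁ → u₂ ∈ T x₂ → u₃ ∈ T x₃ →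
      0 ≤ ⟪u₁, x₁ - x₂⟫ + ⟪u₂, x₂ - x₃⟫ + ⟪u₃, x₃ - x₁⟫)
    (xs ξs : EuclideanSpace ℝ (Fin p)) (hξs : ξs ∈ T xs) (hzero : F xs + ξs = 0)
    (τ η : ℝ) (hτ : 1 < τ) (hη : 0 < η)
    (x y ξ : ℕ → EuclideanSpace ℝ (Fin p))
    (hy : ∀ k, y (k + 1) = ((τ - 1) / τ) • x (k + 1) + (1 / τ) • y k)
    (hξ : ∀ k, ξ (k + 1) ∈ T (x (k + 1)))
    (hx : ∀ k, x (k + 1) = y k - η • (F (x k) + ξ (k + 1))) :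
    ∀ γ : ℝ, 0 < γ → ∀ k : ℕ,
      τ * ‖y (k + 2) - xs‖ ^ 2 + (τ - 1) * (τ - γ) * ‖x (k + 2) - x (k + 1)‖ ^ 2 ≤
        τ * ‖y (k + 1) - xs‖ ^ 2
          + ((τ - 1) * L ^ 2 * η ^ 2 / γ) * ‖x (k + 1) - x k‖ ^ 2
          - ((τ - 1) * (1 - τ ^ 2 + τ) / τ) * ‖x (k + 2) - y (k + 1)‖ ^ 2
          - τ * (τ - 1) * ‖x (k + 1) - y (k + 1)‖ ^ 2
          - 2 * η * (τ - 1) * ⟪F (x (k + 1)) - F xs, x (k + 1) - xs⟫ := by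
  intro γ hγ k
  have hτ0 : τ ≠ 0 := (zero_lt_one.trans hτ).ne'
  have hmono := IsThreeCyclicallyMonotone.inner_le_of_forwardBackward hT3 hη.le (hξ k)
    (hξ (k + 1)) hξs hzero (hx k) (hx (k + 1))
  rw [sub_eq_smul_sub_of_eq_average hτ0 (hy k), real_inner_smul_left,
    show k + 1 + 1 = k + 2 from rfl] at hmono
  have hpos := two_mul_inner_sub_sub (y (k + 1)) (x (k + 2)) xs
  have hprev := two_mul_inner_sub_sub (y (k + 1)) (x (k + 1)) (x (k + 2))
  rw [norm_sub_rev (y (k + 1)) (x (k + 2))] at hpos hprev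
  have havg := mul_norm_sub_sq_of_eq_average hτ0 (hy (k + 1)) xs
  have hyoung := two_mul_inner_sub_le_of_lipschitz hL hη.le hγ (x (k + 1)) (x k)
    (x (k + 1) - x (k + 2))
  have hstep := mul_le_mul_of_nonneg_left (add_le_add (add_le_add hmono hmono) hyoung)
    (sub_nonneg.2 hτ.le)
  have hcoef : (τ - 1) * (1 - τ ^ 2 + τ) / τ = (τ - 1) / τ - (τ - 1) ^ 2 := by
    field_simp
    ring
  rw [hcoef, norm_sub_rev (x (k + 2)) (x (k + 1)), norm_sub_rev (x (k + 1)) (y (k + 1))]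
  linear_combination havg + hstep + (τ - 1) * hpos + (τ - 1) * τ * hprev

theorem golden_ratio_key_estimate {p : ℕ}
    (F : EuclideanSpace ℝ (Fin p) → EuclideanSpace ℝ (Fin p))
    (L : ℝ) (hL0 : 0 ≤ L) (hL : ∀ a b, ‖F a - F b‖ ≤ L * ‖a - b‖)
    (T : EuclideanSpace ℝ (Fin p) → Set (EuclideanSpace ℝ (Fin p)))
    (hT3 : ∀ x₁ u₁ x₂ u₂ x₃ u₃, u₁ ∈ T x₁ → u₂ ∈ T x₂ → u₃ ∈ T x₃ →
      0 ≤ ⟪u₁, x₁ - x₂⟫ + ⟪u₂, x₂ - x₃⟫ + ⟪u₃, x₃ - x₁⟫)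
    (xs ξs : EuclideanSpace ℝ (Fin p)) (hξs : ξs ∈ T xs) (hzero : F xs + ξs = 0)
    (τ η : ℝ) (hτ : 1 < τ) (hη : 0 < η)
    (x y ξ : ℕ → EuclideanSpace ℝ (Fin p))
    (hy : ∀ k, y (k + 1) = ((τ - 1) / τ) • x (k + 1) + (1 / τ) • y k)
    (hξ : ∀ k, ξ (k + 1) ∈ T (x (k + 1)))
    (hx : ∀ k, x (k + 1) = y k - η • (F (x k) + ξ (k + 1))) :
    ∀ γ : ℝ, 0 < γ → ∀ k : ℕ,
      τ * ‖y (k + 2) - xs‖ ^ 2 + (τ - 1) * (τ - γ) * ‖x (k + 2) - x (k + 1)‖ ^ 2 ≤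
        τ * ‖y (k + 1) - xs‖ ^ 2
          + ((τ - 1) * L ^ 2 * η ^ 2 / γ) * ‖x (k + 1) - x k‖ ^ 2
          - ((τ - 1) * (1 - τ ^ 2 + τ) / τ) * ‖x (k + 2) - y (k + 1)‖ ^ 2
          - τ * (τ - 1) * ‖x (k + 1) - y (k + 1)‖ ^ 2
          - 2 * η * (τ - 1) * ⟪F (x (k + 1)) - F xs, x (k + 1) - xs⟫ :=
  golden_ratio_key_estimate_general F L hL T hT3 xs ξs hξs hzero τ η hτ hη x y ξ hy hξ hx
end

section
/- Let F : ℝ^p → ℝ^p be monotone and L-Lipschitz, T maximally 3-cyclically monotone, and let (x^k, y^k) be generated by y^k := J_{ηT}(x^k - η u^k), x^{k+1} := J_{ηT}(x^k - η Fy^k) (β = 1) with ‖Fx^k - u^k‖² ≤ κ₁‖Fx^k - Fy^{k-1}‖² for κ₁ ≥ 0, and stepsize 0 < η < 1/((1+r)L) where r := (κ₁ + √(κ₁² + 4κ₁))/2. Define w^k := Fx^k + ξ^k with ξ^k ∈ Tx^k given by the resolvent. Then, with s := ((1+r)² - 2κ₁ - 1 + √(((1+r)² - 2κ₁ - 1)²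 - 4κ₁(1+κ₁)))/(2(1+κ₁)) and ω := κ₁(s + (1+s)L²η²)/(s - (1+s)κ₁L²η²), the sequence k ↦ ‖w^k‖² + ω‖Fx^k - Fy^{k-1}‖² is nonincreasing. -/
open scoped RealInnerProductSpace

/-!
Write `w = F x + ξ`, `e = u + ζ` and `d = F y + ξ'`, so that `y = x - η e` and `x' = x - η d`.
Monotonicity of `F` on `(x, x')` and 3-cyclic monotonicity of `T` on `(x, y, x')` give
`‖w'‖² + ‖d - e‖² ≤ ‖w‖² + ‖F x' - F y‖² + 2⟪F x - u, d - e⟫`.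
Lipschitz continuity gives `‖F x' - F y‖ ≤ Lη‖d - e‖` and the inexactness of `u` gives
`‖F x - u‖² ≤ κ₁‖F x - F y₋‖²`, so by Cauchy–Schwarz and Young it suffices that
`κ₁ ≤ ω (1 - (1 + ω) c)` with `c = L²η²`. As `r² = κ₁ (1 + r)`, one finds `s = r` and
`ω = r (r + (1 + r) c) / ((1 + r)(1 - r c))`, for which the margin in this inequality is
`r c (1 + r + r²)(1 - (1 + r)² c) / ((1 + r)(1 - r c))²`, nonnegative since `(1 + r) L η < 1`.
-/

lemma two_mul_le_of_sq_le {κ ω a P X Y : ℝ} (hω : 0 ≤ ω) (ha : 0 ≤ a) (hκ : κ ≤ ω * a)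
    (hP : 0 ≤ P) (hX : X ^ 2 ≤ κ * P) : 2 * X * Y ≤ ω * P + a * Y ^ 2 := by
  refine le_of_sq_le_sq ?_ (by positivity)
  have hκP : κ * P * Y ^ 2 ≤ ω * P * (a * Y ^ 2) := by
    have := mul_le_mul_of_nonneg_right hκ (mul_nonneg hP (sq_nonneg Y))
    linarith
  nlinarith [sq_nonneg (ω * P - a * Y ^ 2), mul_le_mul_of_nonneg_right hX (sq_nonneg Y)]

section

variable {E : Type*} [NormedAddCommGroup E] [InnerProductSpace ℝ E]

lemma norm_sq_add_norm_sq_le_of_inner {a a' b u ξ ζ ξ' : E}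
    (hmono : ⟪a' - a, b + ξ'⟫ ≤ 0)
    (hcyc : 0 ≤ ⟪ξ, u + ζ⟫ + ⟪ζ, (b + ξ') - (u + ζ)⟫ - ⟪ξ', b + ξ'⟫) :
    ‖a' + ξ'‖ ^ 2 + ‖(b + ξ') - (u + ζ)‖ ^ 2 ≤
      ‖a + ξ‖ ^ 2 + ‖a' - b‖ ^ 2 + 2 * ⟪a - u, (b + ξ') - (u + ζ)⟫ := by
  have key : ‖a' + ξ'‖ ^ 2 + ‖(b + ξ') - (u + ζ)‖ ^ 2 + ‖(a + ξ) - (u + ζ)‖ ^ 2 -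
      (‖a + ξ‖ ^ 2 + ‖a' - b‖ ^ 2 + 2 * ⟪a - u, (b + ξ') - (u + ζ)⟫) =
      2 * ⟪a' - a, b + ξ'⟫ - 2 * (⟪ξ, u + ζ⟫ + ⟪ζ, (b + ξ') - (u + ζ)⟫ - ⟪ξ', b + ξ'⟫) := by
    simp only [← real_inner_self_eq_norm_sq, inner_add_left, inner_add_right, inner_sub_left,
      inner_sub_right, real_inner_comm]
    ring
  nlinarith [sq_nonneg ‖(a + ξ) - (u + ζ)‖]

end

namespace GeneralizedEG

lemma r_nonneg_and_sq_eq {κ r : ℝ} (hκ : 0 ≤ κ) (hr : r = (κ + √(κ ^ 2 + 4 * κ)) / 2) :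
    0 ≤ r ∧ r ^ 2 = κ * (1 + r) := by
  have hsq : √(κ ^ 2 + 4 * κ) ^ 2 = κ ^ 2 + 4 * κ := Real.sq_sqrt (by positivity)
  subst hr
  exact ⟨by positivity, by linear_combination hsq / 4⟩

lemma s_eq_r {κ r : ℝ} (hκ : 0 ≤ κ) (hr : 0 ≤ r) (hrκ : r ^ 2 = κ * (1 + r)) :
    ((1 + r) ^ 2 - 2 * κ - 1 +
      √(((1 + r) ^ 2 - 2 * κ - 1) ^ 2 - 4 * κ * (1 + κ))) / (2 * (1 + κ)) = r := by
  have hdisc : ((1 + r) ^ 2 - 2 * κ - 1) ^ 2 - 4 * κ * (1 + κ) = (κ * (1 + r)) ^ 2 := by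
    linear_combination (4 + κ + 4 * r + κ * r + r ^ 2) * hrκ
  rw [hdisc, Real.sqrt_sq (by positivity), div_eq_iff (by positivity)]
  linear_combination hrκ

lemma ω_eq {κ r c : ℝ} (hr : 0 ≤ r) (hrκ : r ^ 2 = κ * (1 + r)) (hrc : r * c < 1) :
    κ * (r + (1 + r) * c) / (r - (1 + r) * κ * c) =
      r * (r + (1 + r) * c) / ((1 + r) * (1 - r * c)) := by
  rcases hr.eq_or_lt with rfl | hr
  · -- then `κ = 0` and the left side is `0 / 0 = 0`
    simp [show κ = 0 by linarith]
  · have hrc' : 0 < 1 - r * c := by linarith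
    rw [show r - (1 + r) * κ * c = r * (1 - r * c) by linear_combination c * hrκ,
      div_eq_div_iff (by positivity) (by positivity)]
    linear_combination -(r + (1 + r) * c) * (1 - r * c) * hrκ

lemma ω_bounds {κ r c ω : ℝ} (hr : 0 ≤ r) (hrκ : r ^ 2 = κ * (1 + r)) (hc : 0 ≤ c)
    (hrc : (1 + r) ^ 2 * c < 1) (hω : ω = κ * (r + (1 + r) * c) / (r - (1 + r) * κ * c)) :
    0 ≤ ω ∧ (1 + ω) * c ≤ 1 ∧ κ ≤ ω * (1 - (1 + ω) * c) := by
  have h1 : 0 < 1 - r * c := by nlinarith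
  have hD : 0 < (1 + r) * (1 - r * c) := by positivity
  rw [ω_eq hr hrκ (by linarith)] at hω
  have hκ : κ = r ^ 2 / (1 + r) := by rw [hrκ]; field_simp
  subst hω hκ
  refine ⟨by positivity, ?_, ?_⟩
  · rw [← sub_nonneg]
    have hslack : 1 - (1 + r * (r + (1 + r) * c) / ((1 + r) * (1 - r * c))) * c
      = ((1 + r) - c * (1 + 2 * r + 2 * r ^ 2)) / ((1 + r) * (1 - r * c)) := by
      field_simp; ring
    rw [hslack]
    apply div_nonneg _ hD.le
    nlinarith
  · rw [← sub_nonneg]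
    have hmargin : r * (r + (1 + r) * c) / ((1 + r) * (1 - r * c)) *
        (1 - (1 + r * (r + (1 + r) * c) / ((1 + r) * (1 - r * c))) * c) - r ^ 2 / (1 + r)
      = r * c * (1 + r + r ^ 2) * (1 - (1 + r) ^ 2 * c) / ((1 + r) * (1 - r * c)) ^ 2 := by
      field_simp; ring
    rw [hmargin]
    have : 0 ≤ 1 - (1 + r) ^ 2 * c := by linarith
    positivity

section

variable {E : Type*} [NormedAddCommGroup E] [InnerProductSpace ℝ E]
  {F : E → E} {T : E → Set E} {η : ℝ} {x y x' u ζ ξ ξ' : E}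

lemma step_norm_sq_le (hmono : ∀ a b, 0 ≤ ⟪F a - F b, a - b⟫)
    (hT3 : ∀ x₁ u₁ x₂ u₂ x₃ u₃, u₁ ∈ T x₁ → u₂ ∈ T x₂ → u₃ ∈ T x₃ →
      0 ≤ ⟪u₁, x₁ - x₂⟫ + ⟪u₂, x₂ - x₃⟫ + ⟪u₃, x₃ - x₁⟫)
    (hη : 0 < η) (hξ : ξ ∈ T x) (hζ : ζ ∈ T y) (hξ' : ξ' ∈ T x')
    (hy : y = x - η • (u + ζ)) (hx' : x' = x - η • (F y + ξ')) :
    ‖F x' + ξ'‖ ^ 2 + ‖(F y + ξ') - (u + ζ)‖ ^ 2 ≤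
      ‖F x + ξ‖ ^ 2 + ‖F x' - F y‖ ^ 2 + 2 * ⟪F x - u, (F y + ξ') - (u + ζ)⟫ := by
  have hxy : x - y = η • (u + ζ) := by rw [hy, sub_sub_cancel]
  have hyx' : y - x' = η • ((F y + ξ') - (u + ζ)) := by subst hx' hy; rw [smul_sub]; abel
  have hx'x : x' - x = -(η • (F y + ξ')) := by rw [hx', sub_sub_cancel_left]
  apply norm_sq_add_norm_sq_le_of_inner
  · have h := hmono x' x
    rw [hx'x, inner_neg_right, real_inner_smul_right] at h
    nlinarith
  · have h := hT3 x ξ y ζ x' ξ' hξ hζ hξ'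
    rw [hxy, hyx', hx'x, inner_neg_right, real_inner_smul_right, real_inner_smul_right,
      real_inner_smul_right] at h
    nlinarith

lemma step_sub_sq_le {L : ℝ} (hL : ∀ a b, ‖F a - F b‖ ≤ L * ‖a - b‖) (hη : 0 < η)
    (hy : y = x - η • (u + ζ)) (hx' : x' = x - η • (F y + ξ')) :
    ‖F x' - F y‖ ^ 2 ≤ L ^ 2 * η ^ 2 * ‖(F y + ξ') - (u + ζ)‖ ^ 2 := by
  have hx'y : x' - y = η • ((u + ζ) - (F y + ξ')) := by subst hx' hy; rw [smul_sub]; abel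
  have h := hL x' y
  rw [hx'y, norm_smul, Real.norm_of_nonneg hη.le, norm_sub_rev (u + ζ)] at h
  calc ‖F x' - F y‖ ^ 2 ≤ (L * (η * ‖(F y + ξ') - (u + ζ)‖)) ^ 2 :=
        pow_le_pow_left₀ (norm_nonneg _) h 2
    _ = L ^ 2 * η ^ 2 * ‖(F y + ξ') - (u + ζ)‖ ^ 2 := by ring

end

end GeneralizedEG

theorem geg2_last_iterate_monotone {p : ℕ}
    (F : EuclideanSpace ℝ (Fin p) → EuclideanSpace ℝ (Fin p))
    (hmono : ∀ a b, 0 ≤ ⟪F a - F b, a - b⟫)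
    (L : ℝ) (hL0 : 0 < L) (hL : ∀ a b, ‖F a - F b‖ ≤ L * ‖a - b‖)
    (T : EuclideanSpace ℝ (Fin p) → Set (EuclideanSpace ℝ (Fin p)))
    (hT3 : ∀ x₁ u₁ x₂ u₂ x₃ u₃, u₁ ∈ T x₁ → u₂ ∈ T x₂ → u₃ ∈ T x₃ →
      0 ≤ ⟪u₁, x₁ - x₂⟫ + ⟪u₂, x₂ - x₃⟫ + ⟪u₃, x₃ - x₁⟫)
    (κ₁ r : ℝ) (hκ₁ : 0 ≤ κ₁)
    (hr : r = (κ₁ + Real.sqrt (κ₁ ^ 2 + 4 * κ₁)) / 2)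
    (η : ℝ) (hη₀ : 0 < η) (hη₁ : η < 1 / ((1 + r) * L))
    (x y u ζ ξ : ℕ → EuclideanSpace ℝ (Fin p))
    (hζ : ∀ k, ζ k ∈ T (y k))
    (hξ : ∀ k, ξ (k + 1) ∈ T (x (k + 1)))
    (hy : ∀ k, y k = x k - η • (u k + ζ k))
    (hx : ∀ k, x (k + 1) = x k - η • (F (y k) + ξ (k + 1)))
    (hu : ∀ k, ‖F (x (k + 1)) - u (k + 1)‖ ^ 2 ≤ κ₁ * ‖F (x (k + 1)) - F (y k)‖ ^ 2)
    (s ω : ℝ)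
    (hs : s = ((1 + r) ^ 2 - 2 * κ₁ - 1 +
      Real.sqrt (((1 + r) ^ 2 - 2 * κ₁ - 1) ^ 2 - 4 * κ₁ * (1 + κ₁))) / (2 * (1 + κ₁)))
    (hω : ω = κ₁ * (s + (1 + s) * L ^ 2 * η ^ 2) / (s - (1 + s) * κ₁ * L ^ 2 * η ^ 2)) :
    Antitone (fun k : ℕ =>
      ‖F (x (k + 1)) + ξ (k + 1)‖ ^ 2 + ω * ‖F (x (k + 1)) - F (y k)‖ ^ 2) := by
  obtain ⟨hr0, hrκ⟩ := GeneralizedEG.r_nonneg_and_sq_eq hκ₁ hr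
  have hsr : s = r := hs.trans (GeneralizedEG.s_eq_r hκ₁ hr0 hrκ)
  have hrc : (1 + r) ^ 2 * (L ^ 2 * η ^ 2) < 1 := by
    have h := (lt_div_iff₀ (by positivity)).mp hη₁
    calc (1 + r) ^ 2 * (L ^ 2 * η ^ 2) = (η * ((1 + r) * L)) ^ 2 := by ring
      _ < 1 := pow_lt_one₀ (by positivity) h two_ne_zero
  obtain ⟨hω0, hωc, hκω⟩ :=
    GeneralizedEG.ω_bounds (ω := ω) hr0 hrκ (by positivity) hrc (by rw [hω, hsr]; ring)
  refine antitone_nat_of_succ_le fun k => ?_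
  have hstep := GeneralizedEG.step_norm_sq_le hmono hT3 hη₀ (hξ k) (hζ (k + 1)) (hξ (k + 1))
    (hy (k + 1)) (hx (k + 1))
  have hlip := GeneralizedEG.step_sub_sq_le hL hη₀ (hy (k + 1)) (hx (k + 1))
  have hcs := real_inner_le_norm (F (x (k + 1)) - u (k + 1))
    ((F (y (k + 1)) + ξ (k + 1 + 1)) - (u (k + 1) + ζ (k + 1)))
  have hyoung := two_mul_le_of_sq_le
    (Y := ‖(F (y (k + 1)) + ξ (k + 1 + 1)) - (u (k + 1) + ζ (k + 1))‖) hω0 (sub_nonneg.mpr hωc) hκω (sq_nonneg _) (hu k)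
  linarith [mul_le_mul_of_nonneg_left hlip (by linarith : 0 ≤ 1 + ω)]
end
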